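/- arXiv:2010.15519 — 5 statements merged into one kernel-verified Lean document; each statement's English description precedes it below -/
import Mathlib

section
/- For every ε > 0 there exists δ > 0 such that the following holds. If p ≤ n^{−1+δ} and G₁, G₂ ~ G(n,p) are two independent binomial random graphs on n vertices, then with high probability M(G₁,G₂) ≤ (1+ε)·n, where M(G₁,G₂) denotes the maximum number of edges of a graph that is isomorphic to a subgraph of G₁ and also to a subgraph of G₂. -/
open MeasureTheory Filter

/-- Bernoulli measure on `Bool` with success probability (the truncation to `[0,1]` of) `p`. -/
noncomputable def bernoulliPMF (p : ℝ) : PMF Bool :=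
  PMF.bernoulli (min (Real.toNNReal p) 1) (min_le_right _ _)

/-- The Erdős–Rényi measure `G(n,p)`: each potential edge (element of `Sym2 (Fin n)`)
is present independently with probability `p`. -/
noncomputable def erMeasure (n : ℕ) (p : ℝ) : Measure (Sym2 (Fin n) → Bool) :=
  Measure.pi fun _ => (bernoulliPMF p).toMeasure

instance (n : ℕ) (p : ℝ) : IsProbabilityMeasure (erMeasure n p) := by
  unfold erMeasure; infer_instance

/-- The simple graph on `Fin n` encoded by an edge-indicator function. -/
def graphOfFun {n : ℕ} (f : Sym2 (Fin n) → Bool) : SimpleGraph (Fin n) where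
  Adj u v := u ≠ v ∧ f s(u, v) = true
  symm := ⟨fun u v ⟨h1, h2⟩ => ⟨h1.symm, by rwa [Sym2.eq_swap]⟩⟩
  loopless := ⟨fun u ⟨h1, _⟩ => h1 rfl⟩
/-- The KeyChain graph `KC(n,t,ℓ)` on vertex set `Fin n` (vertex `i ∈ [n]` is index `i-1`):
a cycle on the first `n-t` vertices plus `t` pendant "keys", the `i`-th key attached to
cycle vertex `i·ℓ`. -/
def keyChain (n t ℓ : ℕ) : SimpleGraph (Fin n) :=
  SimpleGraph.fromRel (fun a b =>
    ((a : ℕ) + 1 ≤ n - t - 1 ∧ (b : ℕ) = (a : ℕ) + 1) ∨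
    ((a : ℕ) + 1 = n - t ∧ (b : ℕ) = 0) ∨
    (∃ i, 1 ≤ i ∧ i ≤ t ∧ (a : ℕ) + 1 = i * ℓ ∧ (b : ℕ) + 1 = n - t + i))

/-- `H` is contained in `G` as a subgraph (up to isomorphism). -/
def containsCopy {α β : Type*} (H : SimpleGraph α) (G : SimpleGraph β) : Prop :=
  ∃ φ : α → β, Function.Injective φ ∧ ∀ a b, H.Adj a b → G.Adj (φ a) (φ b)

/-- The sequence `a₁ = 1`, `a_{j+1} = ⌈a_j · log n / 100⌉` (indexed so that `aSeq n j = a_j`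
for `j ≥ 1`). -/
noncomputable def aSeq (n : ℕ) : ℕ → ℕ
  | 0 => 1
  | 1 => 1
  | (j + 2) => ⌈(aSeq n (j + 1) : ℝ) * Real.log n / 100⌉₊

/-- `j₀`: the minimal index `j` with `a_j ≥ 10n / log n`. -/
noncomputable def jZero (n : ℕ) : ℕ :=
  sInf {j : ℕ | 1 ≤ j ∧ 10 * (n : ℝ) / Real.log n ≤ (aSeq n j : ℝ)}

/-- `t = ⌊log n⌋`. -/
noncomputable def tParam (n : ℕ) : ℕ := ⌊Real.log n⌋₊

/-- `ℓ = 2·j₀`. -/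
noncomputable def ellParam (n : ℕ) : ℕ := 2 * jZero n

open scoped ENNReal Nat Finset

/-!
Two copies of a common subgraph with `m > (1 + ε) n` edges differ by a permutation `σ` of the
vertices, so there is an `m`-set `T` of pairs with `T ⊆ E(G₁)` and `σ(T) ⊆ E(G₂)`: an event of
probability `p^{2m}`. A union bound over the `n!` permutations and the `C(N, m)` sets `T`, where
`N ≤ n²` is the number of pairs, gives `n! C(N, m) p^{2m} ≤ n^{m+n} p^{2m}`, because
`m! ≥ n! n^{m-n}`. For `p ≤ n^{-1+δ}` with `δ = ε / (4(1 + ε))` this is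
`n^{n - (1 - 2δ) m} ≤ n^{-εn/2}`, as `(1 - 2δ)(1 + ε) = 1 + ε/2`; it is at most `1/n` once `εn ≥ 2`.
-/

def largeCommonSubgraphEvent (n m : ℕ) : Set ((Sym2 (Fin n) → Bool) × (Sym2 (Fin n) → Bool)) :=
  {fg | ∃ H : SimpleGraph (Fin n), containsCopy H (graphOfFun fg.1) ∧
    containsCopy H (graphOfFun fg.2) ∧ m ≤ H.edgeSet.ncard}

lemma mem_of_mem_edgeSet_graphOfFun {n : ℕ} {f : Sym2 (Fin n) → Bool} {e : Sym2 (Fin n)}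
    (he : e ∈ (graphOfFun f).edgeSet) : f e = true := by
  induction e using Sym2.ind with
  | _ u v => exact he.2

lemma erMeasure_forall_eq_true (n : ℕ) (p : ℝ) (T : Finset (Sym2 (Fin n))) :
    erMeasure n p {f | ∀ e ∈ T, f e = true} = min (ENNReal.ofReal p) 1 ^ #T := by
  change Measure.pi _ ((T : Set (Sym2 (Fin n))).pi fun _ => {true}) = _
  rw [Measure.pi_pi_finset, Finset.prod_const,
    PMF.toMeasure_apply_singleton _ _ (measurableSet_singleton _)]
  rfl

lemma exists_perm_of_containsCopy {V : Type*} [Finite V] {H G₁ G₂ : SimpleGraph V} {m : ℕ}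
    (h₁ : containsCopy H G₁) (h₂ : containsCopy H G₂) (hm : m ≤ H.edgeSet.ncard) :
    ∃ σ : Equiv.Perm V, ∃ T : Finset (Sym2 V),
      #T = m ∧ ∀ e ∈ T, e ∈ G₁.edgeSet ∧ Sym2.map σ e ∈ G₂.edgeSet := by
  obtain ⟨φ₁, hφ₁, hadj₁⟩ := h₁
  obtain ⟨φ₂, hφ₂, hadj₂⟩ := h₂
  let ψ₁ : H →g G₁ := ⟨φ₁, hadj₁ _ _⟩
  let ψ₂ : H →g G₂ := ⟨φ₂, hadj₂ _ _⟩
  let e₁ := Equiv.ofBijective φ₁ hφ₁.bijective_of_finite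
  let e₂ := Equiv.ofBijective φ₂ hφ₂.bijective_of_finite
  have hcomp : ⇑(e₁.symm.trans e₂) ∘ φ₁ = φ₂ := by
    funext a
    simp [e₁, e₂, Equiv.ofBijective_symm_apply_apply]
  rw [Set.ncard_eq_toFinset_card _ H.edgeSet.toFinite] at hm
  obtain ⟨S, hSH, hS⟩ := Finset.exists_subset_card_eq hm
  refine ⟨e₁.symm.trans e₂, S.map ⟨Sym2.map φ₁, Sym2.map.injective hφ₁⟩, by simpa using hS, ?_⟩
  simp only [Finset.mem_map, Function.Embedding.coeFn_mk, forall_exists_index, and_imp]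
  rintro _ e he rfl
  have he : e ∈ H.edgeSet := by simpa using hSH he
  refine ⟨ψ₁.map_mem_edgeSet he, ?_⟩
  rw [Sym2.map_map, hcomp]
  exact ψ₂.map_mem_edgeSet he

lemma erMeasure_prod_largeCommonSubgraphEvent_le (n m : ℕ) (p : ℝ) :
    (erMeasure n p).prod (erMeasure n p) (largeCommonSubgraphEvent n m)
      ≤ n ! * (Fintype.card (Sym2 (Fin n))).choose m * min (ENNReal.ofReal p) 1 ^ (2 * m) := by
  classical
  let cyl (T : Finset (Sym2 (Fin n))) : Set (Sym2 (Fin n) → Bool) := {f | ∀ e ∈ T, f e = true}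
  have hcover : largeCommonSubgraphEvent n m ⊆
      ⋃ σ : Equiv.Perm (Fin n), ⋃ T ∈ Finset.powersetCard m Finset.univ,
          cyl T ×ˢ cyl (T.image (Sym2.map σ)) := by
    rintro fg ⟨H, h₁, h₂, hm⟩
    obtain ⟨σ, T, hT, hTG⟩ := exists_perm_of_containsCopy h₁ h₂ hm
    simp only [Set.mem_iUnion, Finset.mem_powersetCard, Finset.subset_univ, true_and]
    refine ⟨σ, T, hT, fun e he => mem_of_mem_edgeSet_graphOfFun (hTG e he).1, ?_⟩
    simp only [cyl, Set.mem_ofPred_eq, Finset.mem_image, forall_exists_index, and_imp]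
    rintro _ e he rfl
    exact mem_of_mem_edgeSet_graphOfFun (hTG e he).2
  calc _ ≤ _ := measure_mono hcover
    _ ≤ ∑ σ : Equiv.Perm (Fin n), ∑ T ∈ Finset.powersetCard m Finset.univ,
          (erMeasure n p).prod (erMeasure n p) (cyl T ×ˢ cyl (T.image (Sym2.map σ))) :=
      (measure_iUnion_fintype_le _ _).trans
        (Finset.sum_le_sum fun σ _ => measure_biUnion_finset_le _ _)
    _ = ∑ _σ : Equiv.Perm (Fin n), ∑ _T ∈ Finset.powersetCard m Finset.univ,
          min (ENNReal.ofReal p) 1 ^ (2 * m) := by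
      refine Finset.sum_congr rfl fun σ _ => Finset.sum_congr rfl fun T hT => ?_
      rw [Measure.prod_prod, erMeasure_forall_eq_true, erMeasure_forall_eq_true,
        Finset.card_image_of_injective _ (Sym2.map.injective σ.injective),
        (Finset.mem_powersetCard.1 hT).2, ← pow_add, two_mul]
    _ = _ := by
      simp [Finset.card_powersetCard, Fintype.card_perm, mul_assoc]

lemma card_sym2_fin_le (n : ℕ) : Fintype.card (Sym2 (Fin n)) ≤ n ^ 2 := by
  rw [Sym2.card, Fintype.card_fin, Nat.choose_two_right, Nat.add_sub_cancel]
  exact Nat.div_le_of_le_mul (by nlinarith)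

lemma factorial_mul_choose_le_pow {n m N : ℕ} (hn : 0 < n) (hnm : n ≤ m) (hN : N ≤ n ^ 2) :
    n ! * N.choose m ≤ n ^ (m + n) := by
  refine Nat.le_of_mul_le_mul_right ?_ (pow_pos hn (m - n))
  calc n ! * N.choose m * n ^ (m - n) ≤ N.choose m * (n ! * (n + 1) ^ (m - n)) := by
        rw [mul_comm (n !), mul_assoc]
        gcongr
        omega
    _ ≤ N.choose m * m ! := by
        gcongr
        simpa only [Nat.add_sub_cancel' hnm] using
          Nat.factorial_mul_pow_le_factorial (m := n) (n := m - n)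
    _ = N.descFactorial m := by rw [Nat.descFactorial_eq_factorial_mul_choose, mul_comm]
    _ ≤ N ^ m := N.descFactorial_le_pow m
    _ ≤ (n ^ 2) ^ m := by gcongr
    _ = n ^ (m + n) * n ^ (m - n) := by
        rw [← pow_mul, ← pow_add]
        congr 1
        omega

lemma factorial_mul_choose_mul_rpow_le {ε : ℝ} (hε : 0 < ε) {n m : ℕ} (hn : 2 ≤ ε * n)
    (hm : (1 + ε) * n < m) :
    (n ! * (Fintype.card (Sym2 (Fin n))).choose m : ℝ) *
        ((n : ℝ) ^ (-1 + ε / (4 * (1 + ε)))) ^ (2 * m) ≤ (n : ℝ)⁻¹ := by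
  set δ := ε / (4 * (1 + ε)) with hδ
  have hn0 : 0 < n := Nat.cast_pos.1 (pos_of_mul_pos_right (by linarith) hε.le)
  have hn1 : (1 : ℝ) ≤ n := by exact_mod_cast hn0
  have hnm : n ≤ m := by exact_mod_cast (show (n : ℝ) ≤ m by nlinarith)
  have hexp : ((m + n : ℕ) : ℝ) + (-1 + δ) * ((2 * m : ℕ) : ℝ) ≤ -1 := by
    have hδε : δ * (4 * (1 + ε)) = ε := by rw [hδ]; field_simp
    have h2δ : 0 ≤ 1 - 2 * δ := by nlinarith
    push_cast
    nlinarith [mul_nonneg h2δ (sub_nonneg.2 hm.le)]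
  calc (n ! * (Fintype.card (Sym2 (Fin n))).choose m : ℝ) * ((n : ℝ) ^ (-1 + δ)) ^ (2 * m)
      ≤ (n : ℝ) ^ (m + n) * ((n : ℝ) ^ (-1 + δ)) ^ (2 * m) := by
        gcongr
        exact_mod_cast factorial_mul_choose_le_pow hn0 hnm (card_sym2_fin_le n)
    _ = (n : ℝ) ^ (((m + n : ℕ) : ℝ) + (-1 + δ) * ((2 * m : ℕ) : ℝ)) := by
        rw [Real.rpow_add (by positivity) ((m + n : ℕ) : ℝ), Real.rpow_natCast,
          Real.rpow_mul_natCast (by positivity)]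
    _ ≤ (n : ℝ) ^ (-1 : ℝ) := Real.rpow_le_rpow_of_exponent_le hn1 hexp
    _ = (n : ℝ)⁻¹ := Real.rpow_neg_one _

lemma erMeasure_prod_largeCommonSubgraphEvent_le_inv {ε : ℝ} (hε : 0 < ε) {n m : ℕ}
    (hn : 2 ≤ ε * n) (hm : (1 + ε) * n < m) {p : ℝ}
    (hp : p ≤ (n : ℝ) ^ (-1 + ε / (4 * (1 + ε)))) :
    (erMeasure n p).prod (erMeasure n p) (largeCommonSubgraphEvent n m) ≤ (n : ℝ≥0∞)⁻¹ := by
  set x := (n : ℝ) ^ (-1 + ε / (4 * (1 + ε)))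
  have hn0 : (0 : ℝ) < n := pos_of_mul_pos_right (by linarith) hε.le
  calc _ ≤ n ! * (Fintype.card (Sym2 (Fin n))).choose m * min (ENNReal.ofReal p) 1 ^ (2 * m) :=
        erMeasure_prod_largeCommonSubgraphEvent_le n m p
    _ ≤ n ! * (Fintype.card (Sym2 (Fin n))).choose m * ENNReal.ofReal x ^ (2 * m) := by
        gcongr
        exact (min_le_left _ _).trans (ENNReal.ofReal_le_ofReal hp)
    _ = ENNReal.ofReal ((n ! * (Fintype.card (Sym2 (Fin n))).choose m : ℝ) * x ^ (2 * m)) := by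
        rw [ENNReal.ofReal_mul (by positivity), ENNReal.ofReal_pow (by positivity)]
        norm_cast
    _ ≤ ENNReal.ofReal (n : ℝ)⁻¹ :=
        ENNReal.ofReal_le_ofReal (factorial_mul_choose_mul_rpow_le hε hn hm)
    _ = (n : ℝ≥0∞)⁻¹ := by
        rw [ENNReal.ofReal_inv_of_pos hn0, ENNReal.ofReal_natCast]

lemma tendsto_measure_nhds_one_of_compl {ι : Type*} {l : Filter ι} {Ω : ι → Type*}
    [∀ i, MeasurableSpace (Ω i)] {μ : ∀ i, Measure (Ω i)} [∀ i, IsProbabilityMeasure (μ i)]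
    {s : ∀ i, Set (Ω i)} (hs : ∀ i, MeasurableSet (s i))
    (h : Tendsto (fun i => μ i (s i)ᶜ) l (nhds 0)) : Tendsto (fun i => μ i (s i)) l (nhds 1) := by
  have h' := ENNReal.Tendsto.sub tendsto_const_nhds h (Or.inl ENNReal.one_ne_top)
  rw [tsub_zero] at h'
  refine h'.congr fun i => ?_
  rw [← prob_compl_eq_one_sub (hs i).compl, compl_compl]

/-- **Proposition (maximum common subgraph).** For every `ε > 0` there is `δ > 0` such that if
`p ≤ n^(−1+δ)` and `G₁, G₂ ~ G(n,p)` are independent, then whp every common subgraph of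
`G₁` and `G₂` has at most `(1+ε)·n` edges, i.e. `M(G₁,G₂) ≤ (1+ε)n`. -/
theorem max_common_subgraph (ε : ℝ) (hε : 0 < ε) :
    ∃ δ : ℝ, 0 < δ ∧ ∀ p : ℕ → ℝ, (∀ n, 0 ≤ p n) →
      (∀ n : ℕ, p n ≤ (n : ℝ) ^ (-1 + δ)) →
      Tendsto (fun n : ℕ => ((erMeasure n (p n)).prod (erMeasure n (p n)))
          {fg | ∀ H : SimpleGraph (Fin n),
            containsCopy H (graphOfFun fg.1) → containsCopy H (graphOfFun fg.2) →
            (H.edgeSet.ncard : ℝ) ≤ (1 + ε) * n})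
        atTop (nhds 1) := by
  refine ⟨ε / (4 * (1 + ε)), by positivity, fun p _ hp => ?_⟩
  refine tendsto_measure_nhds_one_of_compl (fun n => (Set.to_countable _).measurableSet) ?_
  have hbad : ∀ᶠ n : ℕ in atTop, ((erMeasure n (p n)).prod (erMeasure n (p n)))
      {fg | ∀ H : SimpleGraph (Fin n),
        containsCopy H (graphOfFun fg.1) → containsCopy H (graphOfFun fg.2) →
        (H.edgeSet.ncard : ℝ) ≤ (1 + ε) * n}ᶜ ≤ (n : ℝ≥0∞)⁻¹ := by
    filter_upwards [(tendsto_natCast_atTop_atTop.const_mul_atTop hε).eventually_ge_atTop 2]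
      with n hn
    refine le_trans (measure_mono fun fg hfg => ?_)
      (erMeasure_prod_largeCommonSubgraphEvent_le_inv (m := ⌊(1 + ε) * n⌋₊ + 1) hε hn
        (by push_cast; exact Nat.lt_floor_add_one _) (hp n))
    simp only [Set.mem_compl_iff, Set.mem_ofPred_eq, not_forall, not_le, exists_prop] at hfg
    obtain ⟨H, h₁, h₂, hH⟩ := hfg
    exact ⟨H, h₁, h₂, (Nat.floor_lt (by positivity)).2 hH⟩
  exact tendsto_of_tendsto_of_tendsto_of_le_of_le' tendsto_const_nhds
    ENNReal.tendsto_inv_nat_nhds_zero (Eventually.of_forall fun _ => zero_le) hbad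
end

section
/- Let f(n) satisfy f(n) → ∞ and f(n) = o(log log n), let p = (log n + f(n))/n, and let G ~ G(n,p). Then with high probability, for every pair of disjoint vertex subsets U, W ⊆ V(G) with 10n/log n ≤ |U|, |W| ≤ n/9, one has |N(U) ∩ N(W)| ≥ n/9. -/
open MeasureTheory Filter

/-- The external neighbourhood of a vertex set `U`. -/
def extNbhd {V : Type*} (G : SimpleGraph V) (U : Set V) : Set V :=
  {v | v ∉ U ∧ ∃ u ∈ U, G.Adj u v}

/-- The degree of a vertex. -/
noncomputable def deg {V : Type*} (G : SimpleGraph V) (v : V) : ℕ :=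
  (G.neighborSet v).ncard

/-- The number of neighbours of `v` inside the set `S`. -/
noncomputable def degIn {V : Type*} (G : SimpleGraph V) (v : V) (S : Set V) : ℕ :=
  (G.neighborSet v ∩ S).ncard

/-- The number of edges of `G` with one endpoint in `U` and the other in `W`. -/
noncomputable def edgesBetween {V : Type*} (G : SimpleGraph V) (U W : Set V) : ℕ :=
  {e ∈ G.edgeSet | ∃ u ∈ U, ∃ w ∈ W, e = s(u, w)}.ncard

/-- The number of edges of `G` spanned by `U`. -/
noncomputable def edgesWithin {V : Type*} (G : SimpleGraph V) (U : Set V) : ℕ :=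
  {e ∈ G.edgeSet | ∃ u ∈ U, ∃ w ∈ U, e = s(u, w)}.ncard

/-- `Small(G)`: vertices of degree at most `log n / 10`. -/
def smallSet {n : ℕ} (G : SimpleGraph (Fin n)) : Set (Fin n) :=
  {v | (deg G v : ℝ) ≤ Real.log n / 10}

noncomputable def gammaC : ℝ := 1 / 10000

/-! If disjoint `U, W` violate the bound, the set `S` of vertices outside
`U ∪ W ∪ (N(U) ∩ N(W))` has at least `2n/3` elements, and each of them has no neighbour in `U`
(put it in `A`) or no neighbour in `W` (put it in `B`). So the graph avoids the
`|U||A| + |W||B| ≥ (10n / log n) |S|` pairs of `U × A ∪ W × B`, which has probability at most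
`exp (-p · (10n / log n) · 2n/3) ≤ exp (-20n/3)` once `f ≥ 0`. A union bound over the at most
`16^n` quadruples `(U, W, A, B)` concludes, as `16 < e^{20/3}`. -/

open Finset Real Topology

lemma bernoulliPMF_toMeasure_false {p : ℝ} (hp0 : 0 ≤ p) (hp1 : p ≤ 1) :
    (bernoulliPMF p).toMeasure {false} = ENNReal.ofReal (1 - p) := by
  rw [PMF.toMeasure_apply_singleton _ _ (measurableSet_singleton _),
    ENNReal.ofReal_sub 1 hp0, ENNReal.ofReal_one]
  simp [bernoulliPMF, PMF.bernoulli_apply, min_eq_left (Real.toNNReal_le_one.mpr hp1)]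
  rfl

lemma pi_bernoulliPMF_forall_eq_false_le {ι : Type*} [Fintype ι] {p : ℝ} (hp0 : 0 ≤ p)
    (hp1 : p ≤ 1) (F : Finset ι) :
    Measure.pi (fun _ : ι => (bernoulliPMF p).toMeasure) {x | ∀ i ∈ F, x i = false}
      ≤ ENNReal.ofReal (exp (-(p * #F))) := by
  classical
  have hcyl : {x : ι → Bool | ∀ i ∈ F, x i = false}
      = Set.univ.pi fun i => if i ∈ F then {false} else Set.univ := by
    ext x
    simp only [Set.mem_ofPred_eq, Set.mem_univ_pi]
    refine forall_congr' fun i => ?_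
    split_ifs with hi <;> simp [hi]
  have hfactor : ∀ i, (bernoulliPMF p).toMeasure (if i ∈ F then {false} else Set.univ)
      = if i ∈ F then ENNReal.ofReal (1 - p) else 1 := by
    intro i
    split_ifs
    · exact bernoulliPMF_toMeasure_false hp0 hp1
    · exact measure_univ
  rw [hcyl, Measure.pi_pi]
  simp_rw [hfactor]
  rw [prod_ite_mem, univ_inter, prod_const, ← ENNReal.ofReal_pow (by linarith)]
  gcongr
  calc (1 - p) ^ #F ≤ exp (-p) ^ #F := by
        gcongr
        exact one_sub_le_exp_neg p
    _ = exp (-(p * #F)) := by rw [← exp_nat_mul]; ring_nf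

section Pairs

variable {V : Type*} [DecidableEq V]

lemma card_image_sym2Mk_of_subset_product {L R : Finset V} (hLR : Disjoint L R)
    {P : Finset (V × V)} (hP : P ⊆ L ×ˢ R) : #(P.image fun x => s(x.1, x.2)) = #P := by
  refine card_image_of_injOn fun x hx y hy hxy => ?_
  rcases Sym2.mk_eq_mk_iff.mp hxy with h | rfl
  · exact h
  · exact absurd (mem_product.mp (hP hy)).2 (disjoint_left.mp hLR (mem_product.mp (hP hx)).1)

lemma mul_card_union_le_card_product_union_product {U W A B : Finset V} (hAB : Disjoint A B)
    {m : ℝ} (hU : m ≤ #U) (hW : m ≤ #W) : m * #(A ∪ B) ≤ #(U ×ˢ A ∪ W ×ˢ B) := by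
  have hprod : Disjoint (U ×ˢ A) (W ×ˢ B) := disjoint_product.mpr (Or.inr hAB)
  rw [card_union_of_disjoint hAB, card_union_of_disjoint hprod, card_product, card_product]
  push_cast
  nlinarith [(Nat.cast_nonneg #A : (0:ℝ) ≤ #A), (Nat.cast_nonneg #B : (0:ℝ) ≤ #B)]

end Pairs

lemma SimpleGraph.exists_nonadj_cover_compl_extNbhd_inter {V : Type*} (G : SimpleGraph V)
    (U W : Set V) :
    ∃ A B : Set V, Disjoint A B ∧ A ∪ B = (U ∪ W ∪ (extNbhd G U ∩ extNbhd G W))ᶜ ∧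
      (∀ u ∈ U, ∀ a ∈ A, ¬G.Adj u a) ∧ ∀ w ∈ W, ∀ b ∈ B, ¬G.Adj w b := by
  refine ⟨(U ∪ W ∪ extNbhd G U)ᶜ, (U ∪ W ∪ extNbhd G W)ᶜ ∩ extNbhd G U, ?_, ?_, ?_, ?_⟩
  · exact Set.disjoint_left.mpr fun v hA hB => hA (Or.inr hB.2)
  · ext v
    simp only [Set.mem_union, Set.mem_compl_iff, Set.mem_inter_iff]
    tauto
  · intro u hu a ha hadj
    exact ha (Or.inr ⟨fun haU => ha (Or.inl (Or.inl haU)), u, hu, hadj⟩)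
  · intro w hw b hb hadj
    exact hb.1 (Or.inr ⟨fun hbW => hb.1 (Or.inl (Or.inr hbW)), w, hw, hadj⟩)

def commonNbhdEvent (n : ℕ) (m : ℝ) : Set (Sym2 (Fin n) → Bool) :=
  {fe | ∀ U W : Set (Fin n), Disjoint U W →
    m ≤ (U.ncard : ℝ) → (U.ncard : ℝ) ≤ n / 9 → m ≤ (W.ncard : ℝ) → (W.ncard : ℝ) ≤ n / 9 →
    (n : ℝ) / 9 ≤ ((extNbhd (graphOfFun fe) U ∩ extNbhd (graphOfFun fe) W).ncard : ℝ)}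

def crossNonEdges {V : Type*} [DecidableEq V] (U W A B : Finset V) : Set (Sym2 V → Bool) :=
  {fe | ∀ e ∈ (U ×ˢ A ∪ W ×ˢ B).image fun x => s(x.1, x.2), fe e = false}

lemma exists_crossNonEdges_of_notMem_commonNbhdEvent {n : ℕ} {m : ℝ}
    {fe : Sym2 (Fin n) → Bool} (hfe : fe ∉ commonNbhdEvent n m) :
    ∃ U W A B : Finset (Fin n), m ≤ #U ∧ m ≤ #W ∧ Disjoint A B ∧ Disjoint (A ∪ B) (U ∪ W) ∧
      2 * n / 3 ≤ (#(A ∪ B) : ℝ) ∧ fe ∈ crossNonEdges U W A B := by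
  classical
  simp only [commonNbhdEvent, Set.mem_ofPred_eq, not_forall, not_le, exists_prop] at hfe
  obtain ⟨U, W, -, hU, hU', hW, hW', hX⟩ := hfe
  set X := extNbhd (graphOfFun fe) U ∩ extNbhd (graphOfFun fe) W
  obtain ⟨A, B, hAB, hcover, hUA, hWB⟩ :=
    (graphOfFun fe).exists_nonadj_cover_compl_extNbhd_inter U W
  have hcard : (n : ℝ) ≤ (A ∪ B).ncard + U.ncard + W.ncard + X.ncard := by
    have h := Set.ncard_add_ncard_compl (U ∪ W ∪ X)
    rw [Nat.card_eq_fintype_card, Fintype.card_fin, ← hcover] at h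
    have := Set.ncard_union_le (U ∪ W) X
    have := Set.ncard_union_le U W
    exact_mod_cast (by omega : n ≤ (A ∪ B).ncard + U.ncard + W.ncard + X.ncard)
  have hUW : Disjoint (A ∪ B) (U ∪ W) := by
    rw [hcover]
    exact disjoint_compl_left.mono_right Set.subset_union_left
  refine ⟨U.toFinset, W.toFinset, A.toFinset, B.toFinset, ?_, ?_, ?_, ?_, ?_, ?_⟩
  · rwa [← Set.ncard_eq_toFinset_card']
  · rwa [← Set.ncard_eq_toFinset_card']
  · exact Set.disjoint_toFinset.mpr hAB
  · rw [← Set.toFinset_union, ← Set.toFinset_union]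
    exact Set.disjoint_toFinset.mpr hUW
  · rw [← Set.toFinset_union, ← Set.ncard_eq_toFinset_card']
    linarith
  · simp only [crossNonEdges, Set.mem_ofPred_eq, mem_image, mem_union, mem_product,
      Set.mem_toFinset]
    rintro _ ⟨⟨u, a⟩, hmem, rfl⟩
    dsimp only at hmem ⊢
    rcases hmem with ⟨hu, ha⟩ | ⟨hu, ha⟩
    · have hne : u ≠ a := fun h => Set.disjoint_left.mp hUW (Or.inl ha) (Or.inl (h ▸ hu))
      simpa [graphOfFun, hne] using hUA u hu a ha
    · have hne : u ≠ a := fun h => Set.disjoint_left.mp hUW (Or.inr ha) (Or.inr (h ▸ hu))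
      simpa [graphOfFun, hne] using hWB u hu a ha

lemma erMeasure_crossNonEdges_le {n : ℕ} {p m : ℝ} (hp0 : 0 ≤ p) (hp1 : p ≤ 1)
    {U W A B : Finset (Fin n)} (hU : m ≤ #U) (hW : m ≤ #W) (hAB : Disjoint A B)
    (hABUW : Disjoint (A ∪ B) (U ∪ W)) :
    erMeasure n p (crossNonEdges U W A B) ≤ ENNReal.ofReal (exp (-(p * (m * #(A ∪ B))))) := by
  have hsub : U ×ˢ A ∪ W ×ˢ B ⊆ (U ∪ W) ×ˢ (A ∪ B) :=
    union_subset (product_subset_product subset_union_left subset_union_left)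
      (product_subset_product subset_union_right subset_union_right)
  refine (pi_bernoulliPMF_forall_eq_false_le hp0 hp1 _).trans ?_
  rw [card_image_sym2Mk_of_subset_product hABUW.symm hsub]
  gcongr
  exact mul_card_union_le_card_product_union_product hAB hU hW

lemma erMeasure_compl_commonNbhdEvent_le {n : ℕ} {p m : ℝ} (hp0 : 0 ≤ p) (hp1 : p ≤ 1)
    (hm : 0 ≤ m) :
    erMeasure n p (commonNbhdEvent n m)ᶜ ≤ ENNReal.ofReal ((16 * exp (-(2 * p * m / 3))) ^ n) := by
  classical
  let I : Finset ((Finset (Fin n) × Finset (Fin n)) × (Finset (Fin n) × Finset (Fin n))) :=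
    {t | m ≤ #t.1.1 ∧ m ≤ #t.1.2 ∧ Disjoint t.2.1 t.2.2 ∧
      Disjoint (t.2.1 ∪ t.2.2) (t.1.1 ∪ t.1.2) ∧ 2 * n / 3 ≤ (#(t.2.1 ∪ t.2.2) : ℝ)}
  have hcover : (commonNbhdEvent n m)ᶜ ⊆ ⋃ t ∈ I, crossNonEdges t.1.1 t.1.2 t.2.1 t.2.2 := by
    intro fe hfe
    obtain ⟨U, W, A, B, hU, hW, hAB, hABUW, hcard, hfe⟩ :=
      exists_crossNonEdges_of_notMem_commonNbhdEvent hfe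
    exact Set.mem_biUnion (x := ((U, W), (A, B)))
      (mem_filter.mpr ⟨mem_univ _, hU, hW, hAB, hABUW, hcard⟩) hfe
  have hterm : ∀ t ∈ I, erMeasure n p (crossNonEdges t.1.1 t.1.2 t.2.1 t.2.2)
      ≤ ENNReal.ofReal (exp (-(2 * p * m / 3)) ^ n) := by
    rintro ⟨⟨U, W⟩, A, B⟩ ht
    obtain ⟨-, hU, hW, hAB, hABUW, hcard⟩ := mem_filter.mp ht
    refine (erMeasure_crossNonEdges_le hp0 hp1 hU hW hAB hABUW).trans ?_
    rw [← exp_nat_mul]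
    gcongr
    nlinarith [mul_nonneg hp0 hm]
  have hI : #I ≤ 16 ^ n := by
    refine (card_filter_le _ _).trans_eq ?_
    simp only [card_univ, Fintype.card_prod, Fintype.card_finset, Fintype.card_fin, ← mul_pow]
    norm_num
  calc erMeasure n p (commonNbhdEvent n m)ᶜ
      ≤ ∑ t ∈ I, erMeasure n p (crossNonEdges t.1.1 t.1.2 t.2.1 t.2.2) :=
        (measure_mono hcover).trans (measure_biUnion_finset_le _ _)
    _ ≤ #I * ENNReal.ofReal (exp (-(2 * p * m / 3)) ^ n) := by
        simpa using sum_le_sum hterm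
    _ ≤ 16 ^ n * ENNReal.ofReal (exp (-(2 * p * m / 3)) ^ n) := by gcongr; exact_mod_cast hI
    _ = ENNReal.ofReal ((16 * exp (-(2 * p * m / 3))) ^ n) := by
        rw [mul_pow, ENNReal.ofReal_mul (by positivity),
          ENNReal.ofReal_pow (by norm_num : (0 : ℝ) ≤ 16)]
        norm_num

open Asymptotics in
lemma eventually_edgeProb_bounds {f : ℕ → ℝ} (hf : Tendsto f atTop atTop)
    (hf' : f =o[atTop] fun n : ℕ => log (log n)) :
    ∀ᶠ n : ℕ in atTop, 0 ≤ (log n + f n) / n ∧ (log n + f n) / n ≤ 1 ∧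
      10 ≤ (log n + f n) / n * (10 * n / log n) := by
  have hlog : Tendsto (fun n : ℕ => log n) atTop atTop :=
    tendsto_log_atTop.comp tendsto_natCast_atTop_atTop
  have hlog_o : (fun n : ℕ => log n) =o[atTop] fun n : ℕ => (n : ℝ) :=
    isLittleO_log_id_atTop.comp_tendsto tendsto_natCast_atTop_atTop
  have hf_o : f =o[atTop] fun n : ℕ => (n : ℝ) :=
    (hf'.trans (isLittleO_log_id_atTop.comp_tendsto hlog)).trans hlog_o
  filter_upwards [eventually_gt_atTop 0, hf.eventually_ge_atTop 0, hlog.eventually_gt_atTop 0,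
    (hlog_o.add hf_o).bound one_pos] with n hn hf0 hlogn hsum
  have hn : (0 : ℝ) < n := Nat.cast_pos.mpr hn
  rw [norm_of_nonneg (by positivity), norm_of_nonneg hn.le, one_mul] at hsum
  refine ⟨by positivity, (div_le_one hn).mpr hsum, ?_⟩
  have hratio : (log n + f n) / n * (10 * n / log n) = 10 * (log n + f n) / log n := by
    field_simp
  rw [hratio, le_div_iff₀ hlogn]
  linarith

open Asymptotics in
/-- **(P7)**: whp for all disjoint `U,W` with `10n/log n ≤ |U|,|W| ≤ n/9` one has `|N(U) ∩ N(W)| ≥ n/9`. -/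
theorem gnp_common_neighbourhoods (f : ℕ → ℝ) (hf : Tendsto f atTop atTop)
    (hf' : f =o[atTop] fun n : ℕ => Real.log (Real.log n)) :
    Tendsto (fun n : ℕ => erMeasure n ((Real.log n + f n) / n)
        {fe | ∀ U W : Set (Fin n), Disjoint U W →
          10 * n / Real.log n ≤ (U.ncard : ℝ) → (U.ncard : ℝ) ≤ n / 9 →
          10 * n / Real.log n ≤ (W.ncard : ℝ) → (W.ncard : ℝ) ≤ n / 9 →
          (n : ℝ) / 9 ≤ ((extNbhd (graphOfFun fe) U ∩ extNbhd (graphOfFun fe) W).ncard : ℝ)})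
      atTop (nhds 1) := by
  change Tendsto (fun n : ℕ => erMeasure n ((log n + f n) / n)
    (commonNbhdEvent n (10 * n / log n))) atTop (𝓝 1)
  have hq : 16 * exp (-(20 / 3)) < 1 := by
    have hexp : 16 < exp (20 / 3) := by
      have h : exp (20 / 3) = exp (10 / 3) ^ 2 := by rw [← exp_nat_mul]; norm_num
      nlinarith [add_one_le_exp (10 / 3)]
    rw [exp_neg, ← div_eq_mul_inv]
    exact (div_lt_one (exp_pos _)).mpr hexp
  have hbad : Tendsto (fun n : ℕ => erMeasure n ((log n + f n) / n)
      (commonNbhdEvent n (10 * n / log n))ᶜ) atTop (𝓝 0) := by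
    have hqn : Tendsto (fun n : ℕ => ENNReal.ofReal ((16 * exp (-(20 / 3))) ^ n)) atTop
        (𝓝 0) := by
      simpa using ENNReal.tendsto_ofReal (tendsto_pow_atTop_nhds_zero_of_lt_one (by positivity) hq)
    refine tendsto_of_tendsto_of_tendsto_of_le_of_le' tendsto_const_nhds hqn
      (Eventually.of_forall fun _ => bot_le) ?_
    filter_upwards [eventually_edgeProb_bounds hf hf'] with n ⟨hp0, hp1, hpm⟩
    refine (erMeasure_compl_commonNbhdEvent_le hp0 hp1 (by positivity)).trans ?_
    gcongr
    linarith
  have hgood := ENNReal.Tendsto.sub tendsto_const_nhds hbad (Or.inl ENNReal.one_ne_top)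
  rw [tsub_zero] at hgood
  refine hgood.congr fun n => ?_
  rw [← prob_compl_eq_one_sub (Set.to_countable _).measurableSet, compl_compl]
end

section
/- (Pósa's lemma) Let G be a graph, let P = v₀, v₁, …, v_t be a longest path in G, and let R be the set of all vertices v ∈ V(P) such that there exists a path P' in G with V(P') = V(P) and with endpoints v₀ and v. Then |N(R)| ≤ 2|R| − 1, where N(R) denotes the external neighbourhood of R in G. -/
/-!
Every path from `v₀` with the vertex set of the longest path `P` is itself longest, so all
neighbours of its end lie on it. For such a path `p`, let `E(p)` be the set of ends of the paths
reachable from `p` by Pósa rotations. An edge of `p` with no end in `E(p)` survives every rotation.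
So if `x ∉ E(p)` were adjacent to some `r ∈ E(p)` without having a neighbour on `p` in `E(p)`,
rotating a path ending at `r` at `x` would give `x` a path-neighbour in `E(p)` on top of all of
its neighbours on `p`, which is impossible since an inner vertex of a path has exactly two
path-neighbours and its start exactly one. Hence `N(E(p))` consists of path-neighbours of `E(p)`
on `p`, and there are at most `2|E(p)| - 1` of those because the end of `p` has only one.
Finally `R` is the union of the sets `E(p)` over one path `p` per vertex of `R`; adding them one
at a time, each new external neighbour is a path-neighbour of a newly added vertex.
-/

namespace SimpleGraph.Walk.IsPath

variable {V : Type*} {G : SimpleGraph V} {u v x : V} {p : G.Walk u v}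

lemma ncard_neighborSet_toSubgraph [DecidableEq V] (hp : p.IsPath) (hx : x ∈ p.support) :
    (p.toSubgraph.neighborSet x).ncard = (if x = u then 0 else 1) + (if x = v then 0 else 1) := by
  obtain ⟨i, rfl, hi⟩ := mem_support_iff_exists_getVert.mp hx
  by_cases hnil : p.Nil
  · obtain rfl := hnil.eq
    rw [eq_nil_iff_nil.mpr hnil]
    simp [neighborSet_singletonSubgraph]
  simp only [hp.getVert_eq_start_iff hi, hp.getVert_eq_end_iff hi]
  have hlen : 0 < p.length := not_nil_iff_lt_length.mp hnil
  rcases Nat.eq_zero_or_pos i with rfl | hi0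
  · simp [hp.neighborSet_toSubgraph_startpoint hnil, hlen.ne]
  rcases hi.eq_or_lt with rfl | hil
  · simp [hp.neighborSet_toSubgraph_endpoint hnil, hi0.ne']
  simp [hp.ncard_neighborSet_toSubgraph_internal_eq_two hi0.ne' hil, hi0.ne', hil.ne]

lemma ncard_neighborSet_toSubgraph_le_two (hp : p.IsPath) (x : V) :
    (p.toSubgraph.neighborSet x).ncard ≤ 2 := by
  classical
  by_cases hx : x ∈ p.support
  · rw [hp.ncard_neighborSet_toSubgraph hx]
    split_ifs <;> simp
  · have : p.toSubgraph.neighborSet x = ∅ :=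
      Set.eq_empty_of_forall_notMem fun _ hy => hx (mem_support_of_adj_toSubgraph hy)
    simp [this]

lemma ncard_neighborSet_toSubgraph_end_le_one (hp : p.IsPath) :
    (p.toSubgraph.neighborSet v).ncard ≤ 1 := by
  classical
  rw [hp.ncard_neighborSet_toSubgraph p.end_mem_support, if_pos rfl]
  split_ifs <;> simp

lemma ncard_biUnion_neighborSet_toSubgraph_le (hp : p.IsPath) {B : Set V} (hB : B.Finite) :
    (⋃ b ∈ B, p.toSubgraph.neighborSet b).ncard ≤ 2 * B.ncard := by
  lift B to Finset V using hB
  calc _ ≤ ∑ b ∈ B, (p.toSubgraph.neighborSet b).ncard := by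
        simpa using B.set_ncard_biUnion_le _
    _ ≤ ∑ _ ∈ B, 2 := Finset.sum_le_sum fun b _ => hp.ncard_neighborSet_toSubgraph_le_two b
    _ = 2 * (B : Set V).ncard := by simp [mul_comm]

lemma ncard_biUnion_neighborSet_toSubgraph_lt (hp : p.IsPath) {B : Set V} (hB : B.Finite)
    (hv : v ∈ B) : (⋃ b ∈ B, p.toSubgraph.neighborSet b).ncard < 2 * B.ncard := by
  have hsplit : ⋃ b ∈ B, p.toSubgraph.neighborSet b =
      p.toSubgraph.neighborSet v ∪ ⋃ b ∈ B \ {v}, p.toSubgraph.neighborSet b := by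
    rw [← Set.biUnion_insert (t := p.toSubgraph.neighborSet), Set.insert_sdiff_singleton,
      Set.insert_eq_of_mem hv]
  have hcard : (B \ {v}).ncard + 1 = B.ncard := Set.ncard_sdiff_singleton_add_one hv hB
  calc _ ≤ (p.toSubgraph.neighborSet v).ncard +
          (⋃ b ∈ B \ {v}, p.toSubgraph.neighborSet b).ncard := hsplit ▸ Set.ncard_union_le _ _
    _ ≤ 1 + 2 * (B \ {v}).ncard := add_le_add hp.ncard_neighborSet_toSubgraph_end_le_one
          (hp.ncard_biUnion_neighborSet_toSubgraph_le hB.sdiff)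
    _ < 2 * B.ncard := by omega

lemma length_eq_of_mem_support_iff {w : V} {q : G.Walk u w} (hp : p.IsPath) (hq : q.IsPath)
    (h : ∀ y, y ∈ q.support ↔ y ∈ p.support) : q.length = p.length := by
  have := ((List.perm_ext_iff_of_nodup hq.support_nodup hp.support_nodup).mpr h).length_eq
  simpa [length_support] using this

lemma mem_support_of_adj_end (hp : p.IsPath)
    (hlong : ∀ a b (Q : G.Walk a b), Q.IsPath → Q.length ≤ p.length) {y : V} (hadj : G.Adj v y) :
    y ∈ p.support := by
  by_contra hy
  have := hlong _ _ _ (hp.concat hy hadj)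
  simp at this

end SimpleGraph.Walk.IsPath

namespace Posa

open SimpleGraph Walk Relation

variable {V : Type*} {G : SimpleGraph V} {u : V}

-- Pósa's rotation `v₀ ⋯ x w ⋯ v ↦ v₀ ⋯ x v ⋯ w` along an edge `x v` is an instance
-- (`exists_isRotation`); the argument only uses the properties recorded here.
def IsRotation (p q : Σ v, G.Walk u v) : Prop :=
  q.2.IsPath ∧ (∀ y, y ∈ q.2.support ↔ y ∈ p.2.support) ∧ ∀ e ∈ p.2.edges, e ∈ q.2.edges ∨ q.1 ∈ e

lemma exists_isRotation {v x : V} {p : G.Walk u v} (hp : p.IsPath) (hx : x ∈ p.support)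
    (hxv : x ≠ v) (hadj : G.Adj x v) : ∃ q, IsRotation ⟨v, p⟩ q ∧ p.toSubgraph.Adj x q.1 := by
  obtain ⟨T, D, rfl⟩ := mem_support_iff_exists_append.mp hx
  cases D with
  | nil => exact absurd rfl hxv
  | @cons _ w _ hxw D =>
    refine ⟨⟨w, T.append (cons hadj D.reverse)⟩, ⟨?_, fun y => ?_, fun e he => ?_⟩, ?_⟩
    · have hperm :
          (T.append (cons hadj D.reverse)).support.Perm (T.append (cons hxw D)).support := by
        simpa [support_append, support_reverse] using (List.reverse_perm _).append_left _
      exact IsPath.mk' (hperm.nodup_iff.mpr hp.support_nodup)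
    · simp [support_append, support_reverse]
    · simp only [edges_append, edges_cons, edges_reverse, List.mem_append, List.mem_cons,
        List.mem_reverse] at he ⊢
      rcases he with he | rfl | he
      · exact .inl (.inl he)
      · exact .inr (Sym2.mem_mk_right _ _)
      · exact .inl (.inr (.inr he))
    · simp [adj_toSubgraph_iff_mem_edges]

def rotationEnds (p : Σ v, G.Walk u v) : Set V :=
  {r | ∃ q, ReflTransGen IsRotation p q ∧ q.1 = r}

variable {p q : Σ v, G.Walk u v}

lemma end_mem_rotationEnds (p : Σ v, G.Walk u v) : p.1 ∈ rotationEnds p :=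
  ⟨p, .refl, rfl⟩

lemma mem_support_iff_of_reflTransGen (h : ReflTransGen IsRotation p q) (y : V) :
    y ∈ q.2.support ↔ y ∈ p.2.support := by
  induction h with
  | refl => rfl
  | tail _ hstep ih => exact (hstep.2.1 y).trans ih

lemma isPath_of_reflTransGen (h : ReflTransGen IsRotation p q) (hp : p.2.IsPath) : q.2.IsPath := by
  induction h with
  | refl => exact hp
  | tail _ hstep _ => exact hstep.1

lemma toSubgraph_adj_of_reflTransGen (h : ReflTransGen IsRotation p q) {a b : V}
    (hab : p.2.toSubgraph.Adj a b) (ha : a ∉ rotationEnds p) (hb : b ∉ rotationEnds p) :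
    q.2.toSubgraph.Adj a b := by
  induction h with
  | refl => exact hab
  | @tail q q' hpq hstep ih =>
    rw [adj_toSubgraph_iff_mem_edges] at ih ⊢
    refine (hstep.2.2 _ ih).resolve_right fun hq' => ?_
    have hq'E : q'.1 ∈ rotationEnds p := ⟨q', hpq.tail hstep, rfl⟩
    rcases Sym2.mem_iff.mp hq' with h | h
    · exact ha (h ▸ hq'E)
    · exact hb (h ▸ hq'E)

theorem extNbhd_rotationEnds_subset (hp : p.2.IsPath)
    (hlong : ∀ a b (Q : G.Walk a b), Q.IsPath → Q.length ≤ p.2.length) :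
    extNbhd G (rotationEnds p) ⊆ ⋃ b ∈ rotationEnds p, p.2.toSubgraph.neighborSet b := by
  classical
  rintro x ⟨hxE, _, ⟨q, hpq, rfl⟩, hadj⟩
  have hq : q.2.IsPath := isPath_of_reflTransGen hpq hp
  have hxq : x ∈ q.2.support := hq.mem_support_of_adj_end
    (fun a b Q hQ => (hlong a b Q hQ).trans_eq
      (hp.length_eq_of_mem_support_iff hq (mem_support_iff_of_reflTransGen hpq)).symm) hadj
  have hxp : x ∈ p.2.support := (mem_support_iff_of_reflTransGen hpq x).mp hxq
  have hxq1 : x ≠ q.1 := fun h => hxE ⟨q, hpq, h.symm⟩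
  have hxp1 : x ≠ p.1 := fun h => hxE (h ▸ end_mem_rotationEnds p)
  obtain ⟨q', hqq', hxq'⟩ := exists_isRotation hq hxq hxq1 hadj.symm
  have hq'E : q'.1 ∈ rotationEnds p := ⟨q', hpq.tail hqq', rfl⟩
  by_contra hx
  simp only [Set.mem_iUnion, Subgraph.mem_neighborSet, not_exists] at hx
  -- Rotating `q` at `x` gives `x` a neighbour in `rotationEnds p` on top of all its neighbours
  -- on `p`; but `x` is an inner vertex or the start of both paths, so the counts agree.
  have hsub : p.2.toSubgraph.neighborSet x ⊂ q.2.toSubgraph.neighborSet x :=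
    ⟨fun y hy => toSubgraph_adj_of_reflTransGen hpq hy hxE fun hyE => hx y hyE hy.symm,
      fun h => hx _ hq'E (h hxq').symm⟩
  have := Set.ncard_lt_ncard hsub (finite_neighborSet_toSubgraph _)
  rw [hp.ncard_neighborSet_toSubgraph hxp, hq.ncard_neighborSet_toSubgraph hxq] at this
  simp [hxp1, hxq1] at this

lemma extNbhd_union_subset {a b : V} {A E : Set V} {p : G.Walk a b}
    (hE : extNbhd G E ⊆ ⋃ x ∈ E, p.toSubgraph.neighborSet x) :
    extNbhd G (A ∪ E) ⊆ extNbhd G A ∪ ⋃ x ∈ E \ A, p.toSubgraph.neighborSet x := by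
  rintro x ⟨hxAE, y, hy, hyx⟩
  by_cases hxA : ∃ z ∈ A, G.Adj z x
  · exact .inl ⟨fun h => hxAE (.inl h), hxA⟩
  push Not at hxA
  have hyE : y ∈ E := hy.resolve_left fun h => hxA y h hyx
  obtain ⟨z, hzE, hzx⟩ := Set.mem_iUnion₂.mp (hE ⟨fun h => hxAE (.inr h), y, hyE, hyx⟩)
  exact .inr (Set.mem_iUnion₂.mpr ⟨z, ⟨hzE, fun hzA => hxA z hzA (p.toSubgraph.adj_sub hzx)⟩, hzx⟩)

theorem ncard_extNbhd_biUnion_lt [Finite V] {ι : Type*} {a b : ι → V} (E : ι → Set V)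
    (W : ∀ i, G.Walk (a i) (b i)) (hW : ∀ i, (W i).IsPath) (hb : ∀ i, b i ∈ E i)
    (hE : ∀ i, extNbhd G (E i) ⊆ ⋃ x ∈ E i, (W i).toSubgraph.neighborSet x)
    {F : Finset ι} (hF : F.Nonempty) :
    (extNbhd G (⋃ i ∈ F, E i)).ncard < 2 * (⋃ i ∈ F, E i).ncard := by
  classical
  induction hF using Finset.Nonempty.cons_induction with
  | singleton i =>
    rw [Finset.set_biUnion_singleton]
    exact (Set.ncard_le_ncard (hE i)).trans_lt
      ((hW i).ncard_biUnion_neighborSet_toSubgraph_lt (Set.toFinite _) (hb i))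
  | cons i F _ _ ih =>
    rw [Finset.cons_eq_insert, Finset.set_biUnion_insert, Set.union_comm]
    set A := ⋃ j ∈ F, E j
    have hcard : (A ∪ E i).ncard = A.ncard + (E i \ A).ncard := by
      rw [← Set.union_sdiff_self]
      exact Set.ncard_union_eq Set.disjoint_sdiff_right
    calc (extNbhd G (A ∪ E i)).ncard
        ≤ (extNbhd G A).ncard + (⋃ x ∈ E i \ A, (W i).toSubgraph.neighborSet x).ncard :=
          (Set.ncard_le_ncard (extNbhd_union_subset (hE i))).trans (Set.ncard_union_le _ _)
      _ ≤ (extNbhd G A).ncard + 2 * (E i \ A).ncard :=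
          Nat.add_le_add_left ((hW i).ncard_biUnion_neighborSet_toSubgraph_le (Set.toFinite _)) _
      _ < 2 * (A ∪ E i).ncard := by omega

end Posa

/-- **Pósa's lemma.** If `P` is a longest path in `G` with endpoints `v₀` and `v_t`, and `R`
is the set of vertices `v` such that some path `P'` with `V(P') = V(P)` has endpoints `v₀`
and `v`, then `|N(R)| ≤ 2|R| − 1`. -/
theorem posa_lemma {V : Type*} [Fintype V] (G : SimpleGraph V) (v₀ vt : V)
    (P : G.Walk v₀ vt) (hP : P.IsPath)
    (hlongest : ∀ (a b : V) (Q : G.Walk a b), Q.IsPath → Q.length ≤ P.length) :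
    (extNbhd G {v : V | ∃ P' : G.Walk v₀ v, P'.IsPath ∧
        {y : V | y ∈ P'.support} = {y : V | y ∈ P.support}}).ncard ≤
      2 * {v : V | ∃ P' : G.Walk v₀ v, P'.IsPath ∧
        {y : V | y ∈ P'.support} = {y : V | y ∈ P.support}}.ncard - 1 := by
  classical
  set R := {v : V | ∃ P' : G.Walk v₀ v, P'.IsPath ∧
    {y : V | y ∈ P'.support} = {y : V | y ∈ P.support}}
  have : Nonempty R := ⟨⟨vt, P, hP, rfl⟩⟩
  let W (r : R) : G.Walk v₀ r := r.2.choose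
  have hW (r : R) : (W r).IsPath ∧ ∀ y, y ∈ (W r).support ↔ y ∈ P.support :=
    ⟨r.2.choose_spec.1, Set.ext_iff.mp r.2.choose_spec.2⟩
  have hlong (r : R) a b (Q : G.Walk a b) (hQ : Q.IsPath) : Q.length ≤ (W r).length :=
    (hlongest a b Q hQ).trans_eq (hP.length_eq_of_mem_support_iff (hW r).1 (hW r).2).symm
  have hcover : ⋃ r ∈ (Finset.univ : Finset R), Posa.rotationEnds ⟨r.1, W r⟩ = R := by
    ext v
    simp only [Finset.mem_univ, Set.iUnion_true, Set.mem_iUnion]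
    refine ⟨fun ⟨r, q, hq, hqv⟩ => hqv ▸ ⟨q.2, Posa.isPath_of_reflTransGen hq (hW r).1, ?_⟩,
      fun hv => ⟨⟨v, hv⟩, Posa.end_mem_rotationEnds _⟩⟩
    exact Set.ext fun y => (Posa.mem_support_iff_of_reflTransGen hq y).trans ((hW r).2 y)
  have hlt := Posa.ncard_extNbhd_biUnion_lt (fun r => Posa.rotationEnds ⟨r.1, W r⟩) W
    (fun r => (hW r).1) (fun r => Posa.end_mem_rotationEnds _)
    (fun r => Posa.extNbhd_rotationEnds_subset (p := ⟨r.1, W r⟩) (hW r).1 (hlong r))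
    Finset.univ_nonempty
  rw [hcover] at hlt
  omega
end

section
/- Let G be a connected (k,2)-expander that contains no Hamilton cycle. Then G has at least (k+1)²/2 boosters. -/
/-- A `(k,α)`-expander: every vertex set of size at most `k` has external neighbourhood
of size at least `α` times its own. -/
def isExpander {V : Type*} (H : SimpleGraph V) (k α : ℝ) : Prop :=
  ∀ U : Set V, (U.ncard : ℝ) ≤ k → α * U.ncard ≤ ((extNbhd H U).ncard : ℝ)

/-- The number of edges of a longest path. -/
noncomputable def longestPathLength {V : Type*} (H : SimpleGraph V) : ℕ :=
  sSup {k : ℕ | ∃ (u v : V) (w : H.Walk u v), w.IsPath ∧ w.length = k}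

/-- A graph contains a Hamilton cycle. -/
def hasHamiltonCycle {V : Type*} [DecidableEq V] (H : SimpleGraph V) : Prop :=
  ∃ (a : V) (w : H.Walk a a), w.IsHamiltonianCycle

/-- `{u,v}` is a booster for `H`: it is a non-edge whose addition creates a Hamilton cycle,
or a path longer than a longest path of `H`. -/
def isBooster {V : Type*} [DecidableEq V] (H : SimpleGraph V) (u v : V) : Prop :=
  u ≠ v ∧ ¬ H.Adj u v ∧
    (hasHamiltonCycle (H ⊔ SimpleGraph.fromEdgeSet {s(u, v)}) ∨
      longestPathLength H < longestPathLength (H ⊔ SimpleGraph.fromEdgeSet {s(u, v)}))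

/-!
Pósa's rotation argument. Let `P` be a longest path from `x` to `v`. If `v` is adjacent to a
vertex `y` of `P`, adding the edge `v y` and deleting the edge from `y` to its successor `y⁺`
gives another longest path from `x`, now ending at `y⁺`. Let `S` be the set of endpoints reachable
by repeated rotations. A vertex outside `S` that is adjacent to some `s ∈ S` lies on the
rotated path ending at `s`, and rotating at it shows that it is a neighbour on `P` of a vertex
of `S`. Each vertex has at most two neighbours on `P`, and `v ∈ S` has only one, so
`|N(S)| ≤ 2|S| - 1`. Since `G` is a `(k,2)`-expander, `|S| > k`.

If the two ends of a longest path are joined by an edge, we get a cycle through all of its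
vertices. This cycle is either Hamiltonian or, because the graph is connected, can be opened into
a longer path. So in a connected non-Hamiltonian graph the two ends of a longest path form a
booster. Hence `x` has more than `k` booster partners. The same holds for every `s ∈ S`, since
`s` is the start of a longest path. So in the graph of boosters, more than `k` vertices have
degree more than `k`, which gives at least `(k+1)²/2` boosters.
-/

open Finset

namespace SimpleGraph

variable {V : Type*} {G H : SimpleGraph V} {u v w x y a : V}

theorem bddAbove_setOf_isPath_length [Fintype V] (G : SimpleGraph V) :
    BddAbove {k : ℕ | ∃ (u v : V) (p : G.Walk u v), p.IsPath ∧ p.length = k} :=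
  ⟨Fintype.card V, by rintro _ ⟨_, _, p, hp, rfl⟩; exact hp.length_lt.le⟩

namespace Walk

def IsLongestPath (p : G.Walk u v) : Prop :=
  p.IsPath ∧ p.length = longestPathLength G

theorem IsLongestPath.reverse {p : G.Walk u v} (hp : p.IsLongestPath) :
    p.reverse.IsLongestPath :=
  ⟨hp.1.reverse, (length_reverse p).trans hp.2⟩

theorem IsPath.cons_isCycle_of_two_le_length {p : G.Walk u v} (hp : p.IsPath)
    (hlen : 2 ≤ p.length) (h : G.Adj v u) : (cons h p).IsCycle := by
  refine (cons_isCycle_iff p h).2 ⟨hp, fun he ↦ ?_⟩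
  rw [Sym2.eq_swap, ← adj_toSubgraph_iff_mem_edges] at he
  have := (hp.getVert_eq_end_iff (by omega : 1 ≤ p.length)).1 (hp.snd_of_toSubgraph_adj he)
  omega

section Longest

variable [Fintype V]

theorem IsPath.length_le_longestPathLength {p : G.Walk u v} (hp : p.IsPath) :
    p.length ≤ longestPathLength G :=
  le_csSup (bddAbove_setOf_isPath_length G) ⟨u, v, p, hp, rfl⟩

theorem _root_.SimpleGraph.exists_isLongestPath (G : SimpleGraph V) [Nonempty V] :
    ∃ (u v : V) (p : G.Walk u v), p.IsLongestPath := by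
  have hne : {k : ℕ | ∃ (u v : V) (p : G.Walk u v), p.IsPath ∧ p.length = k}.Nonempty :=
    ⟨0, Classical.arbitrary V, _, nil, .nil, rfl⟩
  obtain ⟨u, v, p, hp⟩ := Nat.sSup_mem hne (bddAbove_setOf_isPath_length G)
  exact ⟨u, v, p, hp⟩

theorem IsLongestPath.mem_support_of_adj {p : G.Walk u v} (hp : p.IsLongestPath)
    (h : G.Adj v a) : a ∈ p.support := by
  by_contra ha
  have := (hp.1.concat ha h).length_le_longestPathLength
  rw [length_concat, hp.2] at this
  omega

theorem IsCycle.length_le_longestPathLength [DecidableEq V] (hG : G.Connected) {c : G.Walk u u}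
    (hc : c.IsCycle) (hy : y ∉ c.support) : c.length ≤ longestPathLength G := by
  obtain ⟨d, -, hd, hd'⟩ :=
    (hG u y).some.exists_boundary_dart {z | z ∈ c.support} c.start_mem_support hy
  have hc' := hc.rotate hd
  have hpath : (cons d.adj.symm (c.rotate d.fst hd).tail.reverse).IsPath := by
    refine hc'.isPath_tail.reverse.cons ?_
    rw [support_reverse, List.mem_reverse, support_tail_of_not_nil _ hc'.not_nil]
    exact fun h ↦ hd' ((mem_support_rotate_iff _ _ _).1 (List.mem_of_mem_tail h))
  have := hpath.length_le_longestPathLength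
  rwa [length_cons, length_reverse, length_tail_add_one hc'.not_nil, length_rotate] at this

variable [DecidableEq V]

theorem IsLongestPath.hasHamiltonCycle_or_lt (hG : G.Connected) {p : G.Walk u v}
    (hp : p.IsLongestPath) (hlen : 2 ≤ p.length) (hGH : G ≤ H) (h : H.Adj v u) :
    hasHamiltonCycle H ∨ longestPathLength G < longestPathLength H := by
  have hc := (hp.1.mapLe hGH).cons_isCycle_of_two_le_length (by rwa [length_mapLe]) h
  by_cases hall : ∀ y, y ∈ p.support
  · have hcard := (isHamiltonian_iff_isPath_and_length_eq.1 (hp.1.isHamiltonian_of_mem hall)).2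
    refine Or.inl ⟨v, _, isHamiltonianCycle_iff_isCycle_and_length_eq.2 ⟨hc, ?_⟩⟩
    have := Fintype.card_pos_iff.2 ⟨u⟩
    rw [length_cons, length_mapLe]
    omega
  · obtain ⟨y, hy⟩ := not_forall.1 hall
    have := hc.length_le_longestPathLength (hG.mono hGH) (y := y) (by
      rw [support_cons, support_mapLe_eq_support, List.mem_cons]
      rintro (rfl | h)
      exacts [hy p.end_mem_support, hy h])
    rw [length_cons, length_mapLe, hp.2] at this
    exact Or.inr this

theorem IsLongestPath.isBooster (hG : G.Connected) (hham : ¬ hasHamiltonCycle G)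
    {p : G.Walk u v} (hp : p.IsLongestPath) (hlen : 2 ≤ p.length) : isBooster G u v := by
  have hne : u ≠ v := by
    rintro rfl
    rw [length_eq_zero_iff.2 (isPath_iff_nil.1 hp.1)] at hlen
    omega
  have hnadj : ¬ G.Adj u v := fun h ↦ by
    rcases hp.hasHamiltonCycle_or_lt hG hlen le_rfl h.symm with h | h
    exacts [hham h, lt_irrefl _ h]
  refine ⟨hne, hnadj, hp.hasHamiltonCycle_or_lt hG hlen le_sup_left ?_⟩
  exact Or.inr ((fromEdgeSet_adj _).2 ⟨Sym2.eq_swap, hne.symm⟩)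

end Longest

theorem IsPath.ncard_neighborSet_toSubgraph_le_two_s17 {p : G.Walk u v} (hp : p.IsPath) (a : V) :
    (p.toSubgraph.neighborSet a).ncard ≤ 2 := by
  by_cases hnil : p.Nil
  · have : p.toSubgraph.neighborSet a = ∅ := by
      ext b
      simp [adj_toSubgraph_iff_mem_edges, edges_eq_nil.2 hnil]
    simp [this]
  by_cases ha : a ∈ p.support
  · obtain ⟨i, rfl, hi⟩ := mem_support_iff_exists_getVert.1 ha
    rcases Nat.eq_zero_or_pos i with rfl | hi0
    · simp [hp.neighborSet_toSubgraph_startpoint hnil]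
    rcases hi.eq_or_lt with rfl | hil
    · simp [hp.neighborSet_toSubgraph_endpoint hnil]
    · rw [hp.ncard_neighborSet_toSubgraph_internal_eq_two hi0.ne' hil]
  · have : p.toSubgraph.neighborSet a = ∅ :=
      Set.eq_empty_of_forall_notMem fun b hb ↦ ha (p.mem_support_of_adj_toSubgraph hb)
    simp [this]

theorem IsPath.ncard_biUnion_neighborSet_toSubgraph_le_s17 [DecidableEq V] {p : G.Walk u v}
    (hp : p.IsPath) (hnil : ¬ p.Nil) {S : Finset V} (hv : v ∈ S) :
    (⋃ s ∈ S, p.toSubgraph.neighborSet s).ncard ≤ 2 * #S - 1 := by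
  have hS := card_pos.2 ⟨v, hv⟩
  calc _ ≤ ∑ s ∈ S, (p.toSubgraph.neighborSet s).ncard := S.set_ncard_biUnion_le _
    _ = (p.toSubgraph.neighborSet v).ncard + ∑ s ∈ S.erase v, (p.toSubgraph.neighborSet s).ncard :=
        (add_sum_erase _ _ hv).symm
    _ ≤ 1 + #(S.erase v) • 2 := by
        gcongr
        · simp [hp.neighborSet_toSubgraph_endpoint hnil]
        · exact sum_le_card_nsmul _ _ _ fun s _ ↦ hp.ncard_neighborSet_toSubgraph_le_two_s17 s
    _ = 2 * #S - 1 := by rw [card_erase_of_mem hv, smul_eq_mul]; omega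

section Rotation

variable [DecidableEq V]

theorem not_nil_dropUntil_of_adj {q : G.Walk x w} (hy : y ∈ q.support) (h : G.Adj w y) :
    ¬ (q.dropUntil y hy).Nil :=
  fun hnil ↦ h.ne hnil.eq.symm

theorem support_eq_takeUntil_append_tail_dropUntil {q : G.Walk x w} (hy : y ∈ q.support) :
    q.support = (q.takeUntil y hy).support ++ (q.dropUntil y hy).support.tail := by
  conv_lhs => rw [← q.take_spec hy]
  rw [support_append]

theorem edges_eq_takeUntil_append_cons_tail_dropUntil {q : G.Walk x w} (hy : y ∈ q.support)
    (hd : ¬ (q.dropUntil y hy).Nil) :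
    q.edges = (q.takeUntil y hy).edges ++
      s(y, (q.dropUntil y hy).snd) :: (q.dropUntil y hy).tail.edges := by
  have := congrArg edges ((q.dropUntil y hy).cons_tail_eq hd)
  rw [edges_cons] at this
  conv_lhs => rw [← q.take_spec hy]
  rw [edges_append, this]

/-- The Pósa rotation of `q : x ⋯ y y⁺ ⋯ w` along the edge `w y`: the walk `x ⋯ y w ⋯ y⁺`. -/
def posaRotate (q : G.Walk x w) (hy : y ∈ q.support) (h : G.Adj w y) :
    G.Walk x (q.dropUntil y hy).snd :=
  (q.takeUntil y hy).append (cons h.symm (q.dropUntil y hy).tail.reverse)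

theorem support_posaRotate_perm {q : G.Walk x w} (hy : y ∈ q.support) (h : G.Adj w y) :
    (q.posaRotate hy h).support.Perm q.support := by
  rw [support_eq_takeUntil_append_tail_dropUntil hy, posaRotate, support_append, support_cons,
    List.tail_cons, support_reverse,
    ← support_tail_of_not_nil _ (not_nil_dropUntil_of_adj hy h)]
  exact (List.reverse_perm _).append_left _

theorem mk_snd_dropUntil_mem_edges {q : G.Walk x w} (hy : y ∈ q.support) (h : G.Adj w y) :
    s(y, (q.dropUntil y hy).snd) ∈ q.edges := by
  simp [edges_eq_takeUntil_append_cons_tail_dropUntil hy (not_nil_dropUntil_of_adj hy h)]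

theorem mem_edges_posaRotate_iff {q : G.Walk x w} (hy : y ∈ q.support) (h : G.Adj w y)
    {e : Sym2 V} (he₁ : e ≠ s(y, w)) (he₂ : e ≠ s(y, (q.dropUntil y hy).snd)) :
    e ∈ (q.posaRotate hy h).edges ↔ e ∈ q.edges := by
  simp [edges_eq_takeUntil_append_cons_tail_dropUntil hy (not_nil_dropUntil_of_adj hy h),
    posaRotate, he₁, he₂]

inductive PosaRotation (p : G.Walk x v) : ∀ {w : V}, G.Walk x w → Prop
  | refl : PosaRotation p p
  | rotate {w y : V} {q : G.Walk x w} (hq : PosaRotation p q) (hy : y ∈ q.support)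
      (h : G.Adj w y) : PosaRotation p (q.posaRotate hy h)

def posaEnds (p : G.Walk x v) : Set V :=
  {w | ∃ q : G.Walk x w, PosaRotation p q}

variable {p : G.Walk x v} {q : G.Walk x w}

theorem PosaRotation.support_perm (hq : PosaRotation p q) : q.support.Perm p.support := by
  induction hq with
  | refl => rfl
  | rotate _ hy h ih => exact (support_posaRotate_perm hy h).trans ih

theorem PosaRotation.isLongestPath (hq : PosaRotation p q) (hp : p.IsLongestPath) :
    q.IsLongestPath := by
  refine ⟨isPath_def _ |>.2 (hq.support_perm.nodup_iff.2 hp.1.support_nodup), ?_⟩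
  have := hq.support_perm.length_eq
  rw [length_support, length_support] at this
  exact (by omega : q.length = p.length).trans hp.2

/-- A rotation at `y` only changes edges at `y`, at the old endpoint and at the new endpoint `y⁺`;
as `y y⁺` is an edge of the rotated path, by induction `y` is excluded by the hypotheses too. -/
theorem PosaRotation.mem_edges_iff (hq : PosaRotation p q) (ha : a ∉ posaEnds p)
    (ha' : ∀ s ∈ posaEnds p, s(s, a) ∉ p.edges) (b : V) :
    s(a, b) ∈ q.edges ↔ s(a, b) ∈ p.edges := by
  induction hq generalizing b with
  | refl => rfl
  | @rotate w y q hq hy h ih =>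
    have hw : w ∈ posaEnds p := ⟨q, hq⟩
    have hy' : (q.dropUntil y hy).snd ∈ posaEnds p := ⟨_, hq.rotate hy h⟩
    have hay : a ≠ y := by
      rintro rfl
      exact ha' _ hy' (Sym2.eq_swap ▸ (ih _).1 (mk_snd_dropUntil_mem_edges hy h))
    have hne : ∀ c, c ∈ posaEnds p → s(a, b) ≠ s(y, c) := fun c hc he ↦ by
      rcases Sym2.mem_iff.1 (he ▸ Sym2.mem_mk_left a b) with rfl | rfl
      exacts [hay rfl, ha hc]
    rw [mem_edges_posaRotate_iff hy h (hne w hw) (hne _ hy'), ih]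

variable [Fintype V]

theorem IsLongestPath.extNbhd_posaEnds_subset (hp : p.IsLongestPath) :
    extNbhd G (posaEnds p) ⊆ ⋃ s ∈ posaEnds p, p.toSubgraph.neighborSet s := by
  rintro a ⟨ha, u, ⟨q, hq⟩, hua⟩
  simp only [Set.mem_iUnion, Subgraph.mem_neighborSet, adj_toSubgraph_iff_mem_edges, exists_prop]
  by_contra! hN
  have haq : a ∈ q.support := (hq.isLongestPath hp).mem_support_of_adj hua
  exact hN _ ⟨_, hq.rotate haq hua⟩
    (Sym2.eq_swap ▸ (hq.mem_edges_iff ha hN _).1 (mk_snd_dropUntil_mem_edges haq hua))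

theorem IsLongestPath.lt_ncard_posaEnds {k : ℕ} (hexp : isExpander G k 2)
    (hp : p.IsLongestPath) (hnil : ¬ p.Nil) : k < (posaEnds p).ncard := by
  classical
  have hv : v ∈ posaEnds p := ⟨p, .refl⟩
  have hext : (extNbhd G (posaEnds p)).ncard ≤ 2 * (posaEnds p).ncard - 1 := by
    calc _ ≤ (⋃ s ∈ posaEnds p, p.toSubgraph.neighborSet s).ncard :=
          Set.ncard_le_ncard hp.extNbhd_posaEnds_subset
      _ = (⋃ s ∈ (posaEnds p).toFinset, p.toSubgraph.neighborSet s).ncard := by simp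
      _ ≤ 2 * #(posaEnds p).toFinset - 1 :=
          hp.1.ncard_biUnion_neighborSet_toSubgraph_le_s17 hnil (Set.mem_toFinset.2 hv)
      _ = _ := by rw [Set.ncard_eq_toFinset_card']
  by_contra! hle
  have h2 : 2 * (posaEnds p).ncard ≤ (extNbhd G (posaEnds p)).ncard := by
    exact_mod_cast hexp _ (by exact_mod_cast hle)
  have := (Set.ncard_pos (Set.toFinite _)).2 ⟨v, hv⟩
  omega

end Rotation

end Walk

theorem two_le_longestPathLength_of_isExpander [Fintype V] [Nonempty V] {k : ℕ} (hk : 0 < k)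
    (hexp : isExpander G k 2) : 2 ≤ longestPathLength G := by
  obtain ⟨v⟩ := ‹Nonempty V›
  have h2 : 1 < (extNbhd G {v}).ncard := by
    have := hexp {v} (by rw [Set.ncard_singleton]; exact_mod_cast hk)
    rw [Set.ncard_singleton, Nat.cast_one] at this
    exact_mod_cast (by linarith : (1 : ℝ) < (extNbhd G {v}).ncard)
  obtain ⟨a, b, ⟨hav, _, hu, hua⟩, ⟨hbv, _, hu', hub⟩, hab⟩ :=
    (Set.one_lt_ncard_iff (Set.toFinite _)).1 h2
  rw [Set.mem_singleton_iff] at hav hbv hu hu'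
  subst hu hu'
  have hp : (Walk.cons hua.symm (Walk.cons hub .nil)).IsPath := by
    simp [Walk.isPath_def, hav, hab, Ne.symm hbv]
  simpa using hp.length_le_longestPathLength

def boosterGraph [DecidableEq V] (G : SimpleGraph V) : SimpleGraph V where
  Adj := isBooster G
  symm := ⟨fun _ _ ⟨hne, hadj, h⟩ ↦ ⟨hne.symm, fun h' ↦ hadj h'.symm, by rwa [Sym2.eq_swap]⟩⟩
  loopless := ⟨fun _ h ↦ h.1 rfl⟩

theorem edgeSet_boosterGraph [DecidableEq V] :
    (boosterGraph G).edgeSet = {e | ∃ u v, e = s(u, v) ∧ isBooster G u v} := by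
  ext e
  induction e using Sym2.ind with
  | _ u v =>
    refine ⟨fun h ↦ ⟨u, v, rfl, h⟩, ?_⟩
    rintro ⟨u', v', he, h⟩
    rw [he]
    exact h

theorem Walk.IsLongestPath.lt_ncard_neighborSet_boosterGraph [Fintype V] [DecidableEq V]
    {k : ℕ} (hG : G.Connected) (hexp : isExpander G k 2) (hham : ¬ hasHamiltonCycle G)
    (h2 : 2 ≤ longestPathLength G) {p : G.Walk x v} (hp : p.IsLongestPath) :
    k < ((boosterGraph G).neighborSet x).ncard := by
  refine (hp.lt_ncard_posaEnds hexp ?_).trans_le (Set.ncard_le_ncard ?_)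
  · rw [← Walk.length_eq_zero_iff, hp.2]
    omega
  · rintro s ⟨q, hq⟩
    have hq' := hq.isLongestPath hp
    rw [mem_neighborSet]
    exact hq'.isBooster hG hham (hq'.2 ▸ h2)

theorem ncard_mul_le_two_mul_ncard_edgeSet [Fintype V] (H : SimpleGraph V) {A : Set V} {n : ℕ}
    (hA : ∀ v ∈ A, n ≤ (H.neighborSet v).ncard) : A.ncard * n ≤ 2 * H.edgeSet.ncard := by
  classical
  calc A.ncard * n = ∑ _ ∈ A.toFinset, n := by simp [Set.ncard_eq_toFinset_card']
    _ ≤ ∑ v ∈ A.toFinset, H.degree v := sum_le_sum fun v hv ↦ by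
        rw [← card_neighborSet_eq_degree, ← Nat.card_eq_fintype_card, Nat.card_coe_set_eq]
        exact hA v (Set.mem_toFinset.1 hv)
    _ ≤ ∑ v, H.degree v := sum_le_sum_of_subset (subset_univ _)
    _ = 2 * H.edgeSet.ncard := by
        rw [sum_degrees_eq_twice_card_edges, Set.ncard_eq_toFinset_card', edgeFinset]

end SimpleGraph

/-- **Lemma (Pósa, boosters).** A connected `(k,2)`-expander with no Hamilton cycle has at
least `(k+1)²/2` boosters. -/
theorem boosters_of_expander {V : Type*} [Fintype V] [DecidableEq V]
    (G : SimpleGraph V) (k : ℕ) (hk : 0 < k)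
    (hconn : G.Connected) (hexp : isExpander G (k : ℝ) 2)
    (hham : ¬ hasHamiltonCycle G) :
    ((k : ℝ) + 1) ^ 2 / 2 ≤
      (({e : Sym2 V | ∃ u v : V, e = s(u, v) ∧ isBooster G u v}).ncard : ℝ) := by
  have : Nonempty V := hconn.nonempty
  obtain ⟨x, v, p, hp⟩ := G.exists_isLongestPath
  have h2 := SimpleGraph.two_le_longestPathLength_of_isExpander hk hexp
  have hdeg : ∀ s ∈ p.posaEnds, k + 1 ≤ (G.boosterGraph.neighborSet s).ncard := by
    rintro s ⟨q, hq⟩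
    exact (hq.isLongestPath hp).reverse.lt_ncard_neighborSet_boosterGraph hconn hexp hham h2
  have hends : k + 1 ≤ p.posaEnds.ncard :=
    hp.lt_ncard_posaEnds hexp (by rw [← SimpleGraph.Walk.length_eq_zero_iff, hp.2]; omega)
  have hcount : (k + 1) * (k + 1) ≤ 2 * G.boosterGraph.edgeSet.ncard :=
    (Nat.mul_le_mul_right _ hends).trans (G.boosterGraph.ncard_mul_le_two_mul_ncard_edgeSet hdeg)
  rw [← SimpleGraph.edgeSet_boosterGraph, div_le_iff₀ two_pos, mul_comm, sq]
  exact_mod_cast hcount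
end

section
/- Let m, d ≥ 1 be integers, and let H be a graph on h ≥ 4m vertices satisfying: (1) the minimum degree of H is at least 2; (2) no vertex v ∈ V(H) with d(v) < d is contained in a cycle of length 3 or 4, and every two distinct vertices u, v ∈ V(H) with d(u), d(v) < d are at distance at least 5 from each other; (3) every set F ⊆ V(H) of size at most 5m spans at most d·|F|/10 edges; (4) there is an edge of H between every pair of disjoint sets F₁, F₂ ⊆ V(H) of size m each. Then H is an (h/4, 2)-expander; in particular, H is connected. -/
open SimpleGraph


lemma triangle_cycle {V : Type*} (H : SimpleGraph V) {a b c : V}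
    (hab : H.Adj a b) (hbc : H.Adj b c) (hca : H.Adj c a) :
    ∃ w : H.Walk a a, w.IsCycle ∧ w.length = 3 := by
  refine ⟨Walk.cons hab (Walk.cons hbc (Walk.cons hca Walk.nil)), ?_, rfl⟩
  have h1 : a ≠ b := hab.ne
  have h2 : b ≠ c := hbc.ne
  have h3 : c ≠ a := hca.ne
  rw [Walk.isCycle_def]
  refine ⟨?_, by simp, ?_⟩
  · rw [Walk.isTrail_def]
    simp [Walk.edges_cons, List.nodup_cons, Sym2.eq_iff]
    tauto
  · simp [Walk.support_cons, List.nodup_cons]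
    tauto

lemma quad_cycle {V : Type*} (H : SimpleGraph V) {a b c e : V}
    (hab : H.Adj a b) (hbc : H.Adj b c) (hce : H.Adj c e) (hea : H.Adj e a)
    (hac : a ≠ c) (hbe : b ≠ e) :
    ∃ w : H.Walk a a, w.IsCycle ∧ w.length = 4 := by
  refine ⟨Walk.cons hab (Walk.cons hbc (Walk.cons hce (Walk.cons hea Walk.nil))), ?_, rfl⟩
  have h1 : a ≠ b := hab.ne
  have h2 : b ≠ c := hbc.ne
  have h3 : c ≠ e := hce.ne
  have h4 : e ≠ a := hea.ne
  rw [Walk.isCycle_def]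
  refine ⟨?_, by simp, ?_⟩
  · rw [Walk.isTrail_def]
    simp [Walk.edges_cons, List.nodup_cons, Sym2.eq_iff]
    tauto
  · simp [Walk.support_cons, List.nodup_cons]
    tauto

lemma pair_count {V : Type*} [Fintype V] (H : SimpleGraph V) (c : ℕ) (A : Set V)
    (hA : ∀ x ∈ A, c ≤ deg H x) :
    c * A.ncard ≤ 2 * edgesWithin H (A ∪ extNbhd H A) := by
  classical
  set F := A ∪ extNbhd H A with hF
  set ES : Set (Sym2 V) := {e ∈ H.edgeSet | ∃ u ∈ F, ∃ w ∈ F, e = s(u, w)} with hES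
  set nb : V → Finset V := fun x => (H.neighborSet x).toFinset with hnb
  set P : Finset (V × V) :=
    A.toFinset.biUnion (fun x => (nb x).image (fun y => (x, y))) with hP
  have hmemP : ∀ z : V × V, z ∈ P ↔ z.1 ∈ A ∧ H.Adj z.1 z.2 := by
    intro z
    simp only [hP, Finset.mem_biUnion, Finset.mem_image, Set.mem_toFinset, hnb]
    constructor
    · rintro ⟨x, hx, y, hy, rfl⟩
      exact ⟨hx, hy⟩
    · rintro ⟨hx, hy⟩
      exact ⟨z.1, hx, z.2, hy, rfl⟩
  have hlow : c * A.ncard ≤ P.card := by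
    rw [hP, Finset.card_biUnion]
    · have : ∀ x ∈ A.toFinset, c ≤ ((nb x).image (fun y => (x, y))).card := by
        intro x hx
        rw [Finset.card_image_of_injective _ (by intro a b hh; simpa using hh)]
        have := hA x (by simpa using hx)
        rw [deg, Set.ncard_eq_toFinset_card'] at this
        exact this
      calc c * A.ncard = A.toFinset.card • c := by
            rw [Set.ncard_eq_toFinset_card', smul_eq_mul, mul_comm]
        _ ≤ _ := Finset.card_nsmul_le_sum _ _ _ this
    · intro x hx y hy hxy
      simp only [Finset.disjoint_left, Finset.mem_image]
      rintro a ⟨u, hu, rfl⟩ ⟨v, hv, hv2⟩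
      have hyx : y = x := by
        have := congrArg Prod.fst hv2
        simpa using this
      exact hxy hyx.symm
  have hup : P.card ≤ 2 * edgesWithin H F := by
    have hfib : ∀ e ∈ P.image (fun z : V × V => s(z.1, z.2)),
        (P.filter (fun z : V × V => s(z.1, z.2) = e)).card ≤ 2 := by
      intro e he
      obtain ⟨z0, _, rfl⟩ := Finset.mem_image.mp he
      have hsub : P.filter (fun z : V × V => s(z.1, z.2) = s(z0.1, z0.2)) ⊆
          {(z0.1, z0.2), (z0.2, z0.1)} := by
        intro z hz
        rw [Finset.mem_filter] at hz
        rcases Sym2.eq_iff.mp hz.2 with ⟨h1, h2⟩ | ⟨h1, h2⟩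
        · simp [Finset.mem_insert, Prod.ext_iff, h1, h2]
        · simp [Finset.mem_insert, Prod.ext_iff, h1, h2]
      refine le_trans (Finset.card_le_card hsub) ?_
      refine le_trans (Finset.card_insert_le _ _) ?_
      simp
    have h1 := Finset.card_le_mul_card_image P 2 hfib
    have h2 : P.image (fun z : V × V => s(z.1, z.2)) ⊆ ES.toFinset := by
      intro e he
      simp only [Finset.mem_image] at he
      obtain ⟨z, hz, rfl⟩ := he
      rw [hmemP] at hz
      rw [Set.mem_toFinset]
      refine ⟨hz.2, z.1, Or.inl hz.1, z.2, ?_, rfl⟩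
      by_cases h : z.2 ∈ A
      · exact Or.inl h
      · exact Or.inr ⟨h, z.1, hz.1, hz.2⟩
    calc P.card ≤ 2 * (P.image (fun z : V × V => s(z.1, z.2))).card := h1
      _ ≤ 2 * ES.toFinset.card := Nat.mul_le_mul_left 2 (Finset.card_le_card h2)
      _ = 2 * edgesWithin H F := by
          rw [edgesWithin, Set.ncard_eq_toFinset_card']
  exact le_trans hlow hup

/-- **Lemma (GKM, Lemma 4.6).** Let `m, d ≥ 1` and let `H` be a graph on `h ≥ 4m` vertices
such that: (1) `δ(H) ≥ 2`; (2) no vertex of degree `< d` lies on a `3`- or `4`-cycle, and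
any two distinct vertices of degree `< d` are at distance at least `5`; (3) every set `F`
of at most `5m` vertices spans at most `d|F|/10` edges; (4) there is an edge between any
two disjoint `m`-sets. Then `H` is an `(h/4, 2)`-expander; in particular, `H` is
connected. -/
theorem expander_criterion {V : Type*} [Fintype V] (m d h : ℕ) (hm : 1 ≤ m) (hd : 1 ≤ d)
    (H : SimpleGraph V) (hcard : Fintype.card V = h) (hh : 4 * m ≤ h)
    -- (1)
    (hmin : ∀ v : V, 2 ≤ deg H v)
    -- (2)
    (hcyc : ∀ v : V, deg H v < d → ∀ w : H.Walk v v, w.IsCycle →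
      w.length ≠ 3 ∧ w.length ≠ 4)
    (hdist : ∀ u v : V, u ≠ v → deg H u < d → deg H v < d →
      ∀ w : H.Walk u v, 5 ≤ w.length)
    -- (3)
    (hsparse : ∀ F : Set V, (F.ncard : ℝ) ≤ 5 * m →
      (edgesWithin H F : ℝ) ≤ (d : ℝ) * F.ncard / 10)
    -- (4)
    (hjoin : ∀ F₁ F₂ : Set V, Disjoint F₁ F₂ → F₁.ncard = m → F₂.ncard = m →
      ∃ u ∈ F₁, ∃ v ∈ F₂, H.Adj u v) :
    isExpander H ((h : ℝ) / 4) 2 ∧ H.Connected := by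
  classical
  have hexp : isExpander H ((h : ℝ) / 4) 2 := by
    intro U hU
    by_contra hcon
    push_neg at hcon
    have hNlt : (extNbhd H U).ncard < 2 * U.ncard := by exact_mod_cast hcon
    have h4U : 4 * U.ncard ≤ h := by
      have h4U' : 4 * (U.ncard : ℝ) ≤ (h : ℝ) := by linarith
      exact_mod_cast h4U'
    by_cases hcase : m ≤ U.ncard
    · -- large case: use the joining property
      obtain ⟨F₁, hF₁U, hF₁⟩ := Set.exists_subset_card_eq hcase
      have hWcard : m ≤ ((U ∪ extNbhd H U)ᶜ).ncard := by
        have h1 : (U ∪ extNbhd H U).ncard + ((U ∪ extNbhd H U)ᶜ).ncard = h := by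
          rw [Set.ncard_add_ncard_compl, Nat.card_eq_fintype_card, hcard]
        have h2 : (U ∪ extNbhd H U).ncard ≤ U.ncard + (extNbhd H U).ncard :=
          Set.ncard_union_le _ _
        omega
      obtain ⟨F₂, hF₂W, hF₂⟩ := Set.exists_subset_card_eq hWcard
      have hdisj : Disjoint F₁ F₂ := by
        rw [Set.disjoint_left]
        intro a ha ha2
        exact (hF₂W ha2) (Or.inl (hF₁U ha))
      obtain ⟨u, hu, v, hv, huv⟩ := hjoin F₁ F₂ hdisj hF₁ hF₂
      have hvW := hF₂W hv
      apply hvW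
      by_cases hvU : v ∈ U
      · exact Or.inl hvU
      · exact Or.inr ⟨hvU, u, hF₁U hu, huv⟩
    · -- small case
      push_neg at hcase
      set U₁ : Set V := {x ∈ U | d ≤ deg H x} with hU₁def
      set U₂ : Set V := {x ∈ U | deg H x < d} with hU₂def
      have hsplit : U = U₁ ∪ U₂ := by
        ext x
        simp only [hU₁def, hU₂def, Set.mem_union, Set.mem_setOf_eq]
        constructor
        · intro hx
          by_cases hxd : d ≤ deg H x
          · exact Or.inl ⟨hx, hxd⟩
          · exact Or.inr ⟨hx, by omega⟩
        · rintro (⟨hx, _⟩ | ⟨hx, _⟩) <;> exact hx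
      have hdisj12 : Disjoint U₁ U₂ := by
        rw [Set.disjoint_left]
        rintro a ⟨_, ha1⟩ ⟨_, ha2⟩
        omega
      have hpq : U.ncard = U₁.ncard + U₂.ncard := by
        rw [hsplit, Set.ncard_union_eq hdisj12]
      -- choose two distinct neighbours of every vertex
      have htwo : ∀ u : V, ∃ ab : V × V,
          H.Adj u ab.1 ∧ H.Adj u ab.2 ∧ ab.1 ≠ ab.2 := by
        intro u
        have h2 := hmin u
        have hlt : 1 < (H.neighborSet u).ncard := by
          rw [deg] at h2; omega
        obtain ⟨a, ha, b, hb, hne⟩ := (Set.one_lt_ncard).mp hlt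
        exact ⟨(a, b), ha, hb, hne⟩
      choose g hg1 hg2 hgne using htwo
      set f₁ : V → V := fun u => (g u).1 with hf₁def
      set f₂ : V → V := fun u => (g u).2 with hf₂def
      -- short walks between small vertices are impossible
      have hshort : ∀ u u' : V, u ≠ u' → deg H u < d → deg H u' < d →
          ∀ w : H.Walk u u', ¬ (w.length ≤ 4) := by
        intro u u' h1 h2 h3 w h4
        have := hdist u u' h1 h2 h3 w
        omega
      have hU₂small : ∀ u ∈ U₂, deg H u < d := fun u hu => hu.2
      have hnocommon : ∀ u u' y : V, deg H u < d → deg H u' < d → u ≠ u' →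
          H.Adj u y → H.Adj u' y → False := by
        intro u u' y h1 h2 h3 h4 h5
        exact hshort u u' h3 h1 h2 (Walk.cons h4 h5.symm.toWalk) (by simp)
      have hnoadj : ∀ u u' : V, deg H u < d → deg H u' < d → u ≠ u' →
          H.Adj u u' → False := by
        intro u u' h1 h2 h3 h4
        exact hshort u u' h3 h1 h2 h4.toWalk (by simp)
      set S : Set V := f₁ '' U₂ ∪ f₂ '' U₂ with hSdef
      have hSadj : ∀ v ∈ S, ∃ u ∈ U₂, H.Adj u v := by
        rintro v (⟨u, hu, rfl⟩ | ⟨u, hu, rfl⟩)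
        · exact ⟨u, hu, hg1 u⟩
        · exact ⟨u, hu, hg2 u⟩
      have hScard : 2 * U₂.ncard ≤ S.ncard := by
        have hinj1 : Set.InjOn f₁ U₂ := by
          intro a ha b hb hab
          by_contra hne
          exact hnocommon a b (f₁ a) (hU₂small a ha) (hU₂small b hb) hne (hg1 a)
            (hab ▸ hg1 b)
        have hinj2 : Set.InjOn f₂ U₂ := by
          intro a ha b hb hab
          by_contra hne
          exact hnocommon a b (f₂ a) (hU₂small a ha) (hU₂small b hb) hne (hg2 a)
            (hab ▸ hg2 b)
        have hdisjAC : Disjoint (f₁ '' U₂) (f₂ '' U₂) := by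
          rw [Set.disjoint_left]
          rintro a ⟨u, hu, rfl⟩ ⟨u', hu', heq⟩
          by_cases hne : u = u'
          · subst hne
            exact hgne u heq.symm
          · exact hnocommon u u' (f₁ u) (hU₂small u hu) (hU₂small u' hu') hne (hg1 u)
              (heq ▸ hg2 u')
        rw [hSdef, Set.ncard_union_eq hdisjAC, Set.ncard_image_of_injOn hinj1,
          Set.ncard_image_of_injOn hinj2]
        omega
      have hSU₂ : ∀ v ∈ S, v ∉ U₂ := by
        intro v hv hvU₂
        obtain ⟨u, hu, hadj⟩ := hSadj v hv
        exact hnoadj u v (hU₂small u hu) (hU₂small v hvU₂) hadj.ne hadj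
      have hS1 : S \ U₁ ⊆ extNbhd H U := by
        rintro v ⟨hvS, hv1⟩
        obtain ⟨u, hu2, hadj⟩ := hSadj v hvS
        refine ⟨?_, u, hu2.1, hadj⟩
        rw [hsplit]
        rintro (h | h)
        · exact hv1 h
        · exact hSU₂ v hvS h
      -- the key lemma: a high-degree vertex has at most one neighbour in U₂ ∪ S
      have key : ∀ x : V, d ≤ deg H x → ∀ v v' : V, v ≠ v' → H.Adj x v → H.Adj x v' →
          v ∈ U₂ ∪ S → v' ∈ U₂ ∪ S → False := by
        intro x hx v v' hne hxv hxv' hv hv'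
        -- extract small witnesses
        have hw : ∃ u, deg H u < d ∧ (v = u ∨ H.Adj u v) := by
          rcases hv with h | h
          · exact ⟨v, hU₂small v h, Or.inl rfl⟩
          · obtain ⟨u, hu, hadj⟩ := hSadj v h
            exact ⟨u, hU₂small u hu, Or.inr hadj⟩
        have hw' : ∃ u, deg H u < d ∧ (v' = u ∨ H.Adj u v') := by
          rcases hv' with h | h
          · exact ⟨v', hU₂small v' h, Or.inl rfl⟩
          · obtain ⟨u, hu, hadj⟩ := hSadj v' h
            exact ⟨u, hU₂small u hu, Or.inr hadj⟩
        obtain ⟨u, hu, hvu⟩ := hw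
        obtain ⟨u', hu', hvu'⟩ := hw'
        by_cases huu : u = u'
        · subst huu
          rcases hvu with rfl | ha
          · rcases hvu' with rfl | ha'
            · exact hne rfl
            · -- triangle at v : v — x — v' — v
              obtain ⟨w, hwc, hwl⟩ := triangle_cycle H hxv.symm hxv' ha'.symm
              exact (hcyc v hu w hwc).1 hwl
          · rcases hvu' with rfl | ha'
            · -- triangle at v' : v' — x — v — v'
              obtain ⟨w, hwc, hwl⟩ := triangle_cycle H hxv'.symm hxv ha.symm
              exact (hcyc v' hu w hwc).1 hwl
            · -- 4-cycle at u : u — v — x — v' — u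
              have hux : u ≠ x := by
                intro hh
                rw [hh] at hu
                omega
              obtain ⟨w, hwc, hwl⟩ := quad_cycle H ha hxv.symm hxv' ha'.symm hux hne
              exact (hcyc u hu w hwc).2 hwl
        · -- two different small vertices joined by a walk of length ≤ 4
          have hw1 : ∃ w : H.Walk u x, w.length ≤ 2 := by
            rcases hvu with rfl | ha
            · exact ⟨hxv.symm.toWalk, by simp⟩
            · exact ⟨Walk.cons ha hxv.symm.toWalk, by simp⟩
          have hw2 : ∃ w : H.Walk x u', w.length ≤ 2 := by
            rcases hvu' with rfl | ha'
            · exact ⟨hxv'.toWalk, by simp⟩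
            · exact ⟨Walk.cons hxv' ha'.symm.toWalk, by simp⟩
          obtain ⟨w1, hl1⟩ := hw1
          obtain ⟨w2, hl2⟩ := hw2
          refine hshort u u' huu hu hu' (w1.append w2) ?_
          rw [Walk.length_append]
          omega
      -- the set I of bad externals of U₁
      set I : Set V := extNbhd H U₁ ∩ (U₂ ∪ S) with hIdef
      have hIcard : I.ncard ≤ U₁.ncard := by
        have hex : ∀ v ∈ I, ∃ x ∈ U₁, H.Adj x v := fun v hv => hv.1.2
        set φ : V → V := fun v => if hv : v ∈ I then (hex v hv).choose else v with hφdef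
        have hφmem : ∀ v ∈ I, φ v ∈ U₁ := by
          intro v hv
          rw [hφdef]
          simp only [dif_pos hv]
          exact (hex v hv).choose_spec.1
        have hφadj : ∀ v ∈ I, H.Adj (φ v) v := by
          intro v hv
          rw [hφdef]
          simp only [dif_pos hv]
          exact (hex v hv).choose_spec.2
        refine Set.ncard_le_ncard_of_injOn φ hφmem ?_
        intro a ha b hb hab
        by_contra hne
        have h1 := hφadj a ha
        have h2 := hφadj b hb
        rw [hab] at h1
        exact key (φ b) ((hφmem b hb).2) a b hne h1 h2 ha.2 hb.2
      set T : Set V := extNbhd H U₁ \ (U ∪ S) with hTdef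
      have hT1 : T ⊆ extNbhd H U := by
        rintro v ⟨⟨hv1, x, hx1, hadj⟩, hv2⟩
        exact ⟨fun hh => hv2 (Or.inl hh), x, hx1.1, hadj⟩
      have hT2 : (extNbhd H U₁).ncard ≤ T.ncard + I.ncard := by
        have hsub : extNbhd H U₁ ⊆ T ∪ I := by
          intro v hv
          by_cases hvUS : v ∈ U ∪ S
          · right
            refine ⟨hv, ?_⟩
            rcases hvUS with hvU | hvS
            · rw [hsplit] at hvU
              rcases hvU with h | h
              · exact absurd h hv.1
              · exact Or.inl h
            · exact Or.inr hvS
          · exact Or.inl ⟨hv, hvUS⟩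
        calc (extNbhd H U₁).ncard ≤ (T ∪ I).ncard := Set.ncard_le_ncard hsub
          _ ≤ T.ncard + I.ncard := Set.ncard_union_le _ _
      -- edge counting on F₁ := U₁ ∪ N(U₁)
      set Fe : Set V := U₁ ∪ extNbhd H U₁ with hFedef
      have hFesub : Fe ⊆ U ∪ extNbhd H U := by
        rintro v (hv | hv)
        · exact Or.inl hv.1
        · by_cases hvU : v ∈ U
          · exact Or.inl hvU
          · exact Or.inr ⟨hvU, hv.2.choose, (hv.2.choose_spec.1).1, hv.2.choose_spec.2⟩
      have hFele : Fe.ncard ≤ 5 * m := by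
        have h1 : Fe.ncard ≤ (U ∪ extNbhd H U).ncard := Set.ncard_le_ncard hFesub
        have h2 := Set.ncard_union_le U (extNbhd H U)
        omega
      have hpair := pair_count H d U₁ (fun x hx => hx.2)
      have hsp := hsparse Fe (by exact_mod_cast Nat.cast_le.mpr hFele)
      have h5p : 5 * U₁.ncard ≤ Fe.ncard := by
        have hd1 : (1 : ℝ) ≤ (d : ℝ) := by exact_mod_cast hd
        have hc : (d : ℝ) * U₁.ncard ≤ 2 * ((d : ℝ) * Fe.ncard / 10) := by
          calc (d : ℝ) * U₁.ncard = ((d * U₁.ncard : ℕ) : ℝ) := by push_cast; ring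
            _ ≤ ((2 * edgesWithin H Fe : ℕ) : ℝ) := by exact_mod_cast hpair
            _ = 2 * (edgesWithin H Fe : ℝ) := by push_cast; ring
            _ ≤ 2 * ((d : ℝ) * Fe.ncard / 10) := by linarith [hsp]
        have : 5 * (U₁.ncard : ℝ) ≤ (Fe.ncard : ℝ) := by nlinarith
        exact_mod_cast this
      have hFe2 : Fe.ncard ≤ U₁.ncard + (extNbhd H U₁).ncard := Set.ncard_union_le _ _
      have hsum : (S \ U₁).ncard + T.ncard ≤ (extNbhd H U).ncard := by
        have hdisjST : Disjoint (S \ U₁) T := by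
          rw [Set.disjoint_left]
          rintro a ⟨haS, _⟩ ⟨_, haT⟩
          exact haT (Or.inr haS)
        calc (S \ U₁).ncard + T.ncard = ((S \ U₁) ∪ T).ncard :=
              (Set.ncard_union_eq hdisjST).symm
          _ ≤ (extNbhd H U).ncard :=
              Set.ncard_le_ncard (Set.union_subset hS1 hT1)
      have hSd : 2 * U₂.ncard ≤ (S \ U₁).ncard + U₁.ncard := by
        have h1 : S ⊆ (S \ U₁) ∪ U₁ := by
          intro v hv
          by_cases h : v ∈ U₁
          · exact Or.inr h
          · exact Or.inl ⟨hv, h⟩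
        have h2 : S.ncard ≤ (S \ U₁).ncard + U₁.ncard :=
          le_trans (Set.ncard_le_ncard h1) (Set.ncard_union_le _ _)
        omega
      omega
  refine ⟨hexp, ?_⟩
  -- connectivity
  have hVne : Nonempty V := by
    rw [← Fintype.card_pos_iff, hcard]
    omega
  have hmh : (m : ℝ) ≤ (h : ℝ) / 4 := by
    have : (4 * m : ℝ) ≤ (h : ℝ) := by exact_mod_cast hh
    linarith
  have hreach : ∀ a : V, m ≤ {w | H.Reachable a w}.ncard := by
    intro a
    set S := {w | H.Reachable a w} with hSdef
    have hext : extNbhd H S = ∅ := by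
      ext v
      simp only [Set.mem_empty_iff_false, iff_false]
      rintro ⟨hv, u, hu, hadj⟩
      exact hv (hu.trans hadj.reachable)
    by_cases hS : (S.ncard : ℝ) ≤ (h : ℝ) / 4
    · exfalso
      have h2 := hexp S hS
      rw [hext] at h2
      simp only [Set.ncard_empty, Nat.cast_zero] at h2
      have hSne : a ∈ S := Reachable.refl a
      have hpos : 0 < S.ncard := (Set.ncard_pos (Set.toFinite S)).mpr ⟨a, hSne⟩
      have hposr : (0 : ℝ) < (S.ncard : ℝ) := by exact_mod_cast hpos
      linarith
    · push_neg at hS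
      have : (m : ℝ) < (S.ncard : ℝ) := lt_of_le_of_lt hmh hS
      exact_mod_cast this.le
  constructor
  intro a b
  by_contra hab
  obtain ⟨F₁, hF₁s, hF₁⟩ := Set.exists_subset_card_eq (hreach a)
  obtain ⟨F₂, hF₂s, hF₂⟩ := Set.exists_subset_card_eq (hreach b)
  have hdisj : Disjoint F₁ F₂ := by
    rw [Set.disjoint_left]
    intro x hx1 hx2
    exact hab ((hF₁s hx1).trans (hF₂s hx2).symm)
  obtain ⟨u, hu, v, hv, huv⟩ := hjoin F₁ F₂ hdisj hF₁ hF₂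
  exact hab (((hF₁s hu).trans huv.reachable).trans (hF₂s hv).symm)
end
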